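/- arXiv:math/0003237 — 9 statements merged into one kernel-verified Lean document; each statement's English description precedes it below -/
import Mathlib

section
/- For 0 < ρ₁ ≤ ρ₂ and θ ∈ [0,1], the Gauss norm of a Laurent series satisfies the interpolation inequality |f|_{ρ₁^θ ρ₂^{1-θ}} ≤ |f|_{ρ₁}^θ · |f|_{ρ₂}^{1-θ} (logarithmic convexity of ρ ↦ |f|_ρ). -/
open scoped ENNReal

/-- Logarithmic convexity of the Gauss norm of a Laurent series:
for `0 < ρ₁ ≤ ρ₂` and `θ ∈ [0,1]`,
`|f|_{ρ₁^θ ρ₂^{1-θ}} ≤ |f|_{ρ₁}^θ * |f|_{ρ₂}^{1-θ}`. -/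
theorem gaussNorm_interpolation {K : Type*} [Field K] (abv : AbsoluteValue K ℝ)
    (hna : IsNonarchimedean (abv : K → ℝ))
    (a : ℤ → K) (ρ₁ ρ₂ θ : ℝ)
    (hρ₁ : 0 < ρ₁) (hρ : ρ₁ ≤ ρ₂) (hθ : θ ∈ Set.Icc (0 : ℝ) 1)
    (G : ℝ → ℝ≥0∞)
    (hG : ∀ ρ : ℝ, G ρ = ⨆ k : ℤ, ENNReal.ofReal (abv (a k) * ρ ^ k))
    (h₁ : G ρ₁ ≠ ⊤) (h₂ : G ρ₂ ≠ ⊤) :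
    G (ρ₁ ^ θ * ρ₂ ^ (1 - θ)) ≤ G ρ₁ ^ θ * G ρ₂ ^ (1 - θ) := by
  obtain ⟨hθ0, hθ1⟩ := hθ
  have hθ1' : (0:ℝ) ≤ 1 - θ := by linarith
  have hρ₂ : 0 < ρ₂ := hρ₁.trans_le hρ
  have hm : 0 < ρ₁ ^ θ * ρ₂ ^ (1 - θ) := by positivity
  rw [hG, hG, hG]
  refine iSup_le fun k => ?_
  have step1 : ENNReal.ofReal (abv (a k) * (ρ₁ ^ θ * ρ₂ ^ (1 - θ)) ^ k)
      ≤ ENNReal.ofReal (abv (a k) * ρ₁ ^ k) ^ θ *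
        ENNReal.ofReal (abv (a k) * ρ₂ ^ k) ^ (1 - θ) := by
    rcases (abv.nonneg (a k)).eq_or_lt with h | h
    · simp [← h]
    · apply le_of_eq
      rw [ENNReal.ofReal_rpow_of_nonneg (by positivity) hθ0,
        ENNReal.ofReal_rpow_of_nonneg (by positivity) hθ1',
        ← ENNReal.ofReal_mul (by positivity)]
      congr 1
      have e : ∀ ρ : ℝ, 0 < ρ → (ρ:ℝ)^(k:ℤ) = ρ ^ (k:ℝ) :=
        fun ρ hρ => (Real.rpow_intCast ρ k).symm
      rw [e ρ₁ hρ₁, e ρ₂ hρ₂, e _ hm,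
        Real.mul_rpow (by positivity) (by positivity),
        Real.mul_rpow h.le (by positivity),
        Real.mul_rpow h.le (by positivity),
        ← Real.rpow_mul hρ₁.le, ← Real.rpow_mul hρ₂.le,
        ← Real.rpow_mul hρ₁.le, ← Real.rpow_mul hρ₂.le,
        mul_comm (k:ℝ) θ, mul_comm (k:ℝ) (1-θ)]
      have habv : abv (a k) ^ θ * abv (a k) ^ (1 - θ) = abv (a k) := by
        rw [← Real.rpow_add h]; norm_num
      linear_combination -(ρ₁ ^ (θ*(k:ℝ)) * ρ₂ ^ ((1-θ)*(k:ℝ))) * habv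
  refine step1.trans ?_
  gcongr <;>
    first
      | exact le_iSup (fun k : ℤ => ENNReal.ofReal (abv (a k) * ρ₁ ^ k)) k
      | exact le_iSup (fun k : ℤ => ENNReal.ofReal (abv (a k) * ρ₂ ^ k)) k
end

section
/- If 0 < ρ₁ ≤ ρ ≤ ρ₂ then |f|_ρ ≤ max(|f|_{ρ₁}, |f|_{ρ₂}); i.e., the Gauss norm of a Laurent series on an interval of radii attains its maximum at the endpoints. -/
open scoped ENNReal

lemma zpow_le_aux {a b : ℝ} (ha : 0 < a) (hab : a ≤ b) (k : ℤ) :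
    a ^ k ≤ max (a ^ k) (b ^ k) ∧ b ^ k ≤ max (a ^ k) (b ^ k) := by
  constructor <;> [exact le_max_left _ _; exact le_max_right _ _]

lemma zpow_mono_aux {a b : ℝ} (ha : 0 < a) (hab : a ≤ b) {k : ℤ} (hk : 0 ≤ k) :
    a ^ k ≤ b ^ k := by
  lift k to ℕ using hk
  rw [zpow_natCast, zpow_natCast]
  exact pow_le_pow_left₀ ha.le hab _

lemma zpow_anti_aux {a b : ℝ} (ha : 0 < a) (hab : a ≤ b) {k : ℤ} (hk : k ≤ 0) :
    b ^ k ≤ a ^ k := by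
  have hb : 0 < b := ha.trans_le hab
  obtain ⟨n, rfl⟩ : ∃ n : ℕ, k = -n := ⟨(-k).toNat, by omega⟩
  rw [zpow_neg, zpow_neg, zpow_natCast, zpow_natCast]
  exact inv_anti₀ (by positivity) (pow_le_pow_left₀ ha.le hab _)

/-- The Gauss norm of a Laurent series on an interval of radii attains its maximum
at the endpoints: if `0 < ρ₁ ≤ ρ ≤ ρ₂` then `|f|_ρ ≤ max (|f|_{ρ₁}) (|f|_{ρ₂})`. -/
theorem gaussNorm_le_max_endpoints {K : Type*} [Field K] (abv : AbsoluteValue K ℝ)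
    (hna : IsNonarchimedean (abv : K → ℝ))
    (a : ℤ → K) (ρ₁ ρ ρ₂ : ℝ)
    (hρ₁ : 0 < ρ₁) (h₁ρ : ρ₁ ≤ ρ) (hρρ₂ : ρ ≤ ρ₂)
    (G : ℝ → ℝ≥0∞)
    (hG : ∀ ρ' : ℝ, G ρ' = ⨆ k : ℤ, ENNReal.ofReal (abv (a k) * ρ' ^ k))
    (h₁ : G ρ₁ ≠ ⊤) (h₂ : G ρ₂ ≠ ⊤) :
    G ρ ≤ max (G ρ₁) (G ρ₂) := by
  have hρ : 0 < ρ := hρ₁.trans_le h₁ρ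
  rw [hG ρ]
  refine iSup_le fun k => ?_
  rcases le_or_gt 0 k with hk | hk
  · refine le_trans ?_ (le_max_right _ _)
    rw [hG ρ₂]
    refine le_trans ?_ (le_iSup _ k)
    exact ENNReal.ofReal_le_ofReal
      (mul_le_mul_of_nonneg_left (zpow_mono_aux hρ hρρ₂ hk) (abv.nonneg _))
  · refine le_trans ?_ (le_max_left _ _)
    rw [hG ρ₁]
    refine le_trans ?_ (le_iSup _ k)
    exact ENNReal.ofReal_le_ofReal
      (mul_le_mul_of_nonneg_left (zpow_anti_aux hρ₁ h₁ρ hk.le) (abv.nonneg _))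
end

section
/- Let c(ρ) be a logarithmically concave positive function on (r₁, r₂) and A₁,…,A_n a finite family of m×m matrices whose entries are Laurent series converging on the annulus r₁ < |x| < r₂, such that max_{1≤i≤n} ‖A_i‖(ρ) ≥ c(ρ) for all ρ ∈ (r₁, r₂). Then there exist scalars λ_i ∈ {0,1} such that ‖Σᵢ λ_i A_i‖(ρ) ≥ c(ρ) for all ρ ∈ (r₁, r₂). -/
/-!
Call `L(B)` the set of radii `ρ` with `‖B‖(ρ) < c(ρ)`. Since `‖B‖` is logarithmically convex and
`c` logarithmically concave, `L(B)` is an interval. By hypothesis the intervals `L(Aᵢ)` have no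
common point, so by Helly's theorem on the line some `L(Aᵢ)` and `L(Aⱼ)` are disjoint.

Let `P = Aᵢ`, `R = Aⱼ`, let `E` keep the coefficients of `P` where `|Pₖ| = |Rₖ|`, and `P'`, `R'`
the coefficients of `P`, `R` where `|Pₖ| ≠ |Rₖ|`. Then `‖E‖ ≤ ‖P‖, ‖R‖`, `‖P'‖ ≤ ‖P‖`,
`‖R'‖ ≤ ‖R‖`, `‖P‖ ≤ max ‖E‖ ‖P'‖`, `‖R‖ ≤ max ‖E‖ ‖R'‖`, and, the absolute value being
nonarchimedean, `‖P'‖, ‖R'‖ ≤ ‖P + R‖`. If `P`, `R` and `P + R` each dropped below `c` somewhere,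
the intervals `L(E)`, `L(P')`, `L(R')` would meet pairwise, hence (Helly again) at a common point,
where both `P` and `R` drop below `c`. So one of `Aᵢ`, `Aⱼ`, `Aᵢ + Aⱼ` stays above `c`.
-/

open scoped ENNReal
open Filter
open Set

lemma Real.exists_rpow_mul_rpow_eq {x y z : ℝ} (hx : 0 < x) (hxz : x < z) (hzy : z < y) :
    ∃ a b : ℝ, 0 < a ∧ 0 < b ∧ a + b = 1 ∧ x ^ a * y ^ b = z := by
  have hz : 0 < z := hx.trans hxz
  obtain ⟨a, b, ha, hb, hab, hlog⟩ :=
    Ioo_subset_openSegment ⟨Real.log_lt_log hx hxz, Real.log_lt_log hz hzy⟩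
  refine ⟨a, b, ha, hb, hab, ?_⟩
  rw [Real.rpow_def_of_pos hx, Real.rpow_def_of_pos (hz.trans hzy), ← Real.exp_add,
    ← Real.exp_log hz, ← hlog, smul_eq_mul, smul_eq_mul, mul_comm a, mul_comm b]

lemma Real.mul_rpow_mul_rpow_zpow {x ρ₁ ρ₂ a b : ℝ} (k : ℤ) (hx : 0 ≤ x) (hρ₁ : 0 ≤ ρ₁)
    (hρ₂ : 0 ≤ ρ₂) (hab : a + b = 1) :
    x * (ρ₁ ^ a * ρ₂ ^ b) ^ k = (x * ρ₁ ^ k) ^ a * (x * ρ₂ ^ k) ^ b := by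
  have zpow_rpow_comm : ∀ ρ : ℝ, 0 ≤ ρ → ∀ e : ℝ, (ρ ^ k) ^ e = (ρ ^ e) ^ k := fun ρ hρ e => by
    rw [← Real.rpow_intCast, ← Real.rpow_intCast, ← Real.rpow_mul hρ, ← Real.rpow_mul hρ,
      mul_comm]
  rw [Real.mul_rpow hx (zpow_nonneg hρ₁ k), Real.mul_rpow hx (zpow_nonneg hρ₂ k),
    zpow_rpow_comm ρ₁ hρ₁, zpow_rpow_comm ρ₂ hρ₂, mul_zpow]
  conv_lhs => rw [← Real.rpow_one x, ← hab, Real.rpow_add' hx (hab ▸ one_ne_zero)]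
  ring

lemma rpow_mul_rpow_le_of_concaveOn_log {s : Set ℝ} {c : ℝ → ℝ}
    (hc : ConcaveOn ℝ (Real.log '' s) fun t => Real.log (c (Real.exp t)))
    (hcpos : ∀ ρ ∈ s, 0 < c ρ) {x y a b : ℝ} (hx : x ∈ s) (hy : y ∈ s) (hx0 : 0 < x)
    (hy0 : 0 < y) (ha : 0 ≤ a) (hb : 0 ≤ b) (hab : a + b = 1) (hmem : x ^ a * y ^ b ∈ s) :
    c x ^ a * c y ^ b ≤ c (x ^ a * y ^ b) := by
  have hmean : Real.exp (a * Real.log x + b * Real.log y) = x ^ a * y ^ b := by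
    rw [Real.rpow_def_of_pos hx0, Real.rpow_def_of_pos hy0, ← Real.exp_add, mul_comm a,
      mul_comm b]
  have hlog := hc.2 ⟨x, hx, rfl⟩ ⟨y, hy, rfl⟩ ha hb hab
  simp only [Real.exp_log hx0, Real.exp_log hy0, smul_eq_mul, hmean] at hlog
  rw [Real.rpow_def_of_pos (hcpos x hx), Real.rpow_def_of_pos (hcpos y hy), ← Real.exp_add,
    ← Real.exp_log (hcpos _ hmem)]
  gcongr
  linarith

lemma nonempty_iInter_of_ordConnected {ι : Type*} [Finite ι] {F : ι → Set ℝ}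
    (hF : ∀ i, (F i).OrdConnected) (h : ∀ i j, (F i ∩ F j).Nonempty) :
    (⋂ i, F i).Nonempty := by
  classical
  have := Fintype.ofFinite ι
  have hpair : ∀ I : Finset ι, I.card ≤ 2 → (⋂ i ∈ I, F i).Nonempty := by
    intro I hI
    rcases I.eq_empty_or_nonempty with rfl | ⟨i, hi⟩
    · simp
    have : Nonempty ι := ⟨i⟩
    obtain ⟨j, hj⟩ := Finset.card_le_one_iff_subset_singleton.mp
      (show (I.erase i).card ≤ 1 by rw [Finset.card_erase_of_mem hi]; omega)
    refine (h i j).mono fun ρ hρ => mem_iInter₂.mpr fun k hk => ?_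
    rcases eq_or_ne k i with rfl | hki
    · exact hρ.1
    · rw [Finset.mem_singleton.mp (hj (Finset.mem_erase.mpr ⟨hki, hk⟩))]
      exact hρ.2
  simpa using Convex.helly_theorem' (𝕜 := ℝ) (s := Finset.univ)
    (fun i _ => (hF i).convex) (fun I _ hI => hpair I (by simpa using hI))

lemma nonempty_inter_inter_of_ordConnected {s t u : Set ℝ} (hs : s.OrdConnected)
    (ht : t.OrdConnected) (hu : u.OrdConnected) (hst : (s ∩ t).Nonempty)
    (htu : (t ∩ u).Nonempty) (hsu : (s ∩ u).Nonempty) : (s ∩ t ∩ u).Nonempty := by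
  have := nonempty_iInter_of_ordConnected (F := ![s, t, u]) (by simp [Fin.forall_fin_succ, *])
    (by simp [Fin.forall_fin_succ, inter_comm, hst.left, hst.right, htu.right, *])
  simpa [Set.Nonempty, Fin.forall_fin_succ, and_assoc] using this

namespace Matrix

variable {K ι κ : Type*} [Field K] (abv : AbsoluteValue K ℝ)

noncomputable def gaussNorm (B : Matrix ι κ (ℤ → K)) (ρ : ℝ) : ℝ≥0∞ :=
  ⨆ i, ⨆ j, ⨆ k : ℤ, ENNReal.ofReal (abv (B i j k) * ρ ^ k)

def lowSet (c : ℝ → ℝ) (s : Set ℝ) (B : Matrix ι κ (ℤ → K)) : Set ℝ :=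
  {ρ ∈ s | B.gaussNorm abv ρ < ENNReal.ofReal (c ρ)}

noncomputable def absEqPart (P R : Matrix ι κ (ℤ → K)) : Matrix ι κ (ℤ → K) :=
  fun i j k => if abv (P i j k) = abv (R i j k) then P i j k else 0

noncomputable def absNePart (P R : Matrix ι κ (ℤ → K)) : Matrix ι κ (ℤ → K) :=
  fun i j k => if abv (P i j k) = abv (R i j k) then 0 else P i j k

variable {abv}

lemma ofReal_le_gaussNorm (B : Matrix ι κ (ℤ → K)) (ρ : ℝ) (i : ι) (j : κ) (k : ℤ) :
    ENNReal.ofReal (abv (B i j k) * ρ ^ k) ≤ B.gaussNorm abv ρ :=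
  le_iSup_of_le i <| le_iSup_of_le j <| le_iSup_of_le k le_rfl

lemma gaussNorm_le {B : Matrix ι κ (ℤ → K)} {ρ : ℝ} {M : ℝ≥0∞}
    (h : ∀ i j k, ENNReal.ofReal (abv (B i j k) * ρ ^ k) ≤ M) : B.gaussNorm abv ρ ≤ M :=
  iSup_le fun i => iSup_le fun j => iSup_le fun k => h i j k

lemma gaussNorm_le_max_of_abv_le {B B₁ B₂ : Matrix ι κ (ℤ → K)} {ρ : ℝ} (hρ : 0 ≤ ρ)
    (h : ∀ i j k, abv (B i j k) ≤ abv (B₁ i j k) ∨ abv (B i j k) ≤ abv (B₂ i j k)) :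
    B.gaussNorm abv ρ ≤ max (B₁.gaussNorm abv ρ) (B₂.gaussNorm abv ρ) := by
  refine gaussNorm_le fun i j k => ?_
  have hρk := zpow_nonneg hρ k
  rcases h i j k with h | h
  · exact le_max_of_le_left <| (ENNReal.ofReal_le_ofReal (by gcongr)).trans
      (ofReal_le_gaussNorm B₁ ρ i j k)
  · exact le_max_of_le_right <| (ENNReal.ofReal_le_ofReal (by gcongr)).trans
      (ofReal_le_gaussNorm B₂ ρ i j k)

lemma gaussNorm_mono_of_abv_le {B B' : Matrix ι κ (ℤ → K)} {ρ : ℝ} (hρ : 0 ≤ ρ)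
    (h : ∀ i j k, abv (B i j k) ≤ abv (B' i j k)) :
    B.gaussNorm abv ρ ≤ B'.gaussNorm abv ρ := by
  simpa using gaussNorm_le_max_of_abv_le (B₂ := B') hρ fun i j k => Or.inl (h i j k)

lemma gaussNorm_rpow_mul_rpow_le (B : Matrix ι κ (ℤ → K)) {ρ₁ ρ₂ a b : ℝ}
    (hρ₁ : 0 ≤ ρ₁) (hρ₂ : 0 ≤ ρ₂) (ha : 0 ≤ a) (hb : 0 ≤ b) (hab : a + b = 1) :
    B.gaussNorm abv (ρ₁ ^ a * ρ₂ ^ b) ≤ B.gaussNorm abv ρ₁ ^ a * B.gaussNorm abv ρ₂ ^ b := by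
  refine gaussNorm_le fun i j k => ?_
  have hx := abv.nonneg (B i j k)
  rw [Real.mul_rpow_mul_rpow_zpow k hx hρ₁ hρ₂ hab, ENNReal.ofReal_mul (by positivity),
    ← ENNReal.ofReal_rpow_of_nonneg (by positivity) ha,
    ← ENNReal.ofReal_rpow_of_nonneg (by positivity) hb]
  gcongr <;> exact ofReal_le_gaussNorm B _ i j k

section lowSet

variable {c : ℝ → ℝ} {s : Set ℝ}

lemma lowSet_eq_empty_iff {B : Matrix ι κ (ℤ → K)} :
    lowSet abv c s B = ∅ ↔ ∀ ρ ∈ s, ENNReal.ofReal (c ρ) ≤ B.gaussNorm abv ρ := by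
  simp [lowSet, eq_empty_iff_forall_notMem]

lemma mem_lowSet_of_gaussNorm_le {B B' : Matrix ι κ (ℤ → K)} {ρ : ℝ}
    (hρ : ρ ∈ lowSet abv c s B') (h : B.gaussNorm abv ρ ≤ B'.gaussNorm abv ρ) :
    ρ ∈ lowSet abv c s B :=
  ⟨hρ.1, h.trans_lt hρ.2⟩

theorem ordConnected_lowSet (hs : s.OrdConnected) (hs₀ : s ⊆ Ioi 0)
    (hcpos : ∀ ρ ∈ s, 0 < c ρ)
    (hc : ConcaveOn ℝ (Real.log '' s) fun t => Real.log (c (Real.exp t)))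
    (B : Matrix ι κ (ℤ → K)) : (lowSet abv c s B).OrdConnected := by
  refine ⟨fun x hx y hy z hz => ?_⟩
  rcases hz.1.eq_or_lt with rfl | hxz
  · exact hx
  rcases hz.2.eq_or_lt with rfl | hzy
  · exact hy
  have hx₀ : 0 < x := hs₀ hx.1
  have hy₀ : 0 < y := hs₀ hy.1
  obtain ⟨a, b, ha, hb, hab, rfl⟩ := Real.exists_rpow_mul_rpow_eq hx₀ hxz hzy
  have hzs := hs.out hx.1 hy.1 hz
  refine ⟨hzs, ?_⟩
  calc B.gaussNorm abv (x ^ a * y ^ b)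
      ≤ B.gaussNorm abv x ^ a * B.gaussNorm abv y ^ b :=
        gaussNorm_rpow_mul_rpow_le B hx₀.le hy₀.le ha.le hb.le hab
    _ < ENNReal.ofReal (c x) ^ a * ENNReal.ofReal (c y) ^ b :=
        ENNReal.mul_lt_mul (ENNReal.rpow_lt_rpow hx.2 ha) (ENNReal.rpow_lt_rpow hy.2 hb)
    _ = ENNReal.ofReal (c x ^ a * c y ^ b) := by
        rw [ENNReal.ofReal_rpow_of_nonneg (hcpos x hx.1).le ha.le,
          ENNReal.ofReal_rpow_of_nonneg (hcpos y hy.1).le hb.le,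
          ENNReal.ofReal_mul (by have := hcpos x hx.1; positivity)]
    _ ≤ ENNReal.ofReal (c (x ^ a * y ^ b)) :=
        ENNReal.ofReal_le_ofReal <|
          rpow_mul_rpow_le_of_concaveOn_log hc hcpos hx.1 hy.1 hx₀ hy₀ ha.le hb.le hab hzs

end lowSet

section split

variable {P R : Matrix ι κ (ℤ → K)} {ρ : ℝ}

lemma gaussNorm_absEqPart_le_left (hρ : 0 ≤ ρ) :
    (absEqPart abv P R).gaussNorm abv ρ ≤ P.gaussNorm abv ρ :=
  gaussNorm_mono_of_abv_le hρ fun i j k => by simp only [absEqPart]; split_ifs <;> simp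

lemma gaussNorm_absEqPart_le_right (hρ : 0 ≤ ρ) :
    (absEqPart abv P R).gaussNorm abv ρ ≤ R.gaussNorm abv ρ :=
  gaussNorm_mono_of_abv_le hρ fun i j k => by simp only [absEqPart]; split_ifs <;> simp_all

lemma gaussNorm_absNePart_le (hρ : 0 ≤ ρ) :
    (absNePart abv P R).gaussNorm abv ρ ≤ P.gaussNorm abv ρ :=
  gaussNorm_mono_of_abv_le hρ fun i j k => by simp only [absNePart]; split_ifs <;> simp

lemma gaussNorm_le_max_absEqPart_absNePart (hρ : 0 ≤ ρ) :
    P.gaussNorm abv ρ ≤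
      max ((absEqPart abv P R).gaussNorm abv ρ) ((absNePart abv P R).gaussNorm abv ρ) :=
  gaussNorm_le_max_of_abv_le hρ fun i j k => by
    simp only [absEqPart, absNePart]; split_ifs <;> simp

lemma gaussNorm_le_max_absEqPart_absNePart_right (hρ : 0 ≤ ρ) :
    R.gaussNorm abv ρ ≤
      max ((absEqPart abv P R).gaussNorm abv ρ) ((absNePart abv R P).gaussNorm abv ρ) :=
  gaussNorm_le_max_of_abv_le hρ fun i j k => by
    simp only [absEqPart, absNePart]; split_ifs <;> simp_all

lemma gaussNorm_absNePart_le_add (hna : IsNonarchimedean (abv : K → ℝ)) (hρ : 0 ≤ ρ) :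
    (absNePart abv P R).gaussNorm abv ρ ≤ (P + R).gaussNorm abv ρ :=
  gaussNorm_mono_of_abv_le hρ fun i j k => by
    simp only [absNePart]
    split_ifs with h
    · simp
    · simp [IsNonarchimedean.add_eq_max_of_ne hna h]

end split

theorem lowSet_eq_empty_or_of_inter_eq_empty (hna : IsNonarchimedean (abv : K → ℝ))
    {c : ℝ → ℝ} {s : Set ℝ} (hs₀ : s ⊆ Ici 0)
    (hL : ∀ B : Matrix ι κ (ℤ → K), (lowSet abv c s B).OrdConnected)
    {P R : Matrix ι κ (ℤ → K)} (hPR : lowSet abv c s P ∩ lowSet abv c s R = ∅) :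
    lowSet abv c s P = ∅ ∨ lowSet abv c s R = ∅ ∨ lowSet abv c s (P + R) = ∅ := by
  simp only [← not_nonempty_iff_eq_empty] at hPR ⊢
  by_contra! h
  obtain ⟨⟨u, hu⟩, ⟨v, hv⟩, ⟨w, hw⟩⟩ := h
  obtain ⟨ρ, ⟨hρE, hρP⟩, hρR⟩ := nonempty_inter_inter_of_ordConnected
    (hL (absEqPart abv P R)) (hL (absNePart abv P R)) (hL (absNePart abv R P))
    ⟨u, mem_lowSet_of_gaussNorm_le hu (gaussNorm_absEqPart_le_left (hs₀ hu.1)),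
      mem_lowSet_of_gaussNorm_le hu (gaussNorm_absNePart_le (hs₀ hu.1))⟩
    ⟨w, mem_lowSet_of_gaussNorm_le hw (gaussNorm_absNePart_le_add hna (hs₀ hw.1)),
      mem_lowSet_of_gaussNorm_le hw (add_comm P R ▸ gaussNorm_absNePart_le_add hna (hs₀ hw.1))⟩
    ⟨v, mem_lowSet_of_gaussNorm_le hv (gaussNorm_absEqPart_le_right (hs₀ hv.1)),
      mem_lowSet_of_gaussNorm_le hv (gaussNorm_absNePart_le (hs₀ hv.1))⟩
  have hρ := hs₀ hρE.1
  exact hPR ⟨ρ, ⟨hρE.1, (gaussNorm_le_max_absEqPart_absNePart hρ).trans_lt (max_lt hρE.2 hρP.2)⟩,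
    ⟨hρE.1, (gaussNorm_le_max_absEqPart_absNePart_right hρ).trans_lt (max_lt hρE.2 hρR.2)⟩⟩

theorem exists_finset_lowSet_sum_eq_empty {ι' : Type*} [Finite ι']
    (hna : IsNonarchimedean (abv : K → ℝ)) {c : ℝ → ℝ} {s : Set ℝ} (hs₀ : s ⊆ Ici 0)
    (hL : ∀ B : Matrix ι κ (ℤ → K), (lowSet abv c s B).OrdConnected)
    (A : ι' → Matrix ι κ (ℤ → K))
    (hA : ∀ ρ ∈ s, ENNReal.ofReal (c ρ) ≤ ⨆ i, (A i).gaussNorm abv ρ) :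
    ∃ t : Finset ι', lowSet abv c s (∑ i ∈ t, A i) = ∅ := by
  classical
  rcases isEmpty_or_nonempty ι' with _ | _
  · exact ⟨∅, lowSet_eq_empty_iff.mpr fun ρ hρ => (hA ρ hρ).trans (by simp)⟩
  obtain ⟨i, j, hij⟩ : ∃ i j, lowSet abv c s (A i) ∩ lowSet abv c s (A j) = ∅ := by
    by_contra! h
    obtain ⟨ρ, hρ⟩ := nonempty_iInter_of_ordConnected (fun i => hL (A i)) h
    rw [mem_iInter] at hρ
    obtain ⟨i₀, hi₀⟩ := Finite.exists_max fun i => (A i).gaussNorm abv ρ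
    exact (hρ i₀).2.not_ge ((hA ρ (hρ i₀).1).trans (iSup_le hi₀))
  rcases eq_or_ne i j with rfl | hne
  · exact ⟨{i}, by simpa using hij⟩
  rcases lowSet_eq_empty_or_of_inter_eq_empty hna hs₀ hL hij with h | h | h
  · exact ⟨{i}, by simpa using h⟩
  · exact ⟨{j}, by simpa using h⟩
  · exact ⟨{i, j}, by rwa [Finset.sum_pair hne]⟩

end Matrix

theorem exists_zero_one_combination_ge_general {K : Type*} [Field K]
    (abv : AbsoluteValue K ℝ) (hna : IsNonarchimedean (abv : K → ℝ))
    (r₁ r₂ : ℝ) (hr₁ : 0 < r₁)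
    (m n : ℕ)
    (A : Fin n → Matrix (Fin m) (Fin m) (ℤ → K))
    (c : ℝ → ℝ)
    (hcpos : ∀ ρ ∈ Set.Ioo r₁ r₂, 0 < c ρ)
    (hcconc : ConcaveOn ℝ (Real.log '' Set.Ioo r₁ r₂)
      (fun t => Real.log (c (Real.exp t))))
    (N : Matrix (Fin m) (Fin m) (ℤ → K) → ℝ → ℝ≥0∞)
    (hN : ∀ B ρ, N B ρ =
      ⨆ r', ⨆ c', ⨆ k : ℤ, ENNReal.ofReal (abv (B r' c' k) * ρ ^ k))
    (hlower : ∀ ρ ∈ Set.Ioo r₁ r₂, ENNReal.ofReal (c ρ) ≤ ⨆ i, N (A i) ρ) :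
    ∃ ε : Fin n → K, (∀ i, ε i = 0 ∨ ε i = 1) ∧
      ∀ ρ ∈ Set.Ioo r₁ r₂, ENNReal.ofReal (c ρ) ≤ N (∑ i, ε i • A i) ρ := by
  obtain rfl : N = Matrix.gaussNorm abv := funext₂ hN
  have hpos : Ioo r₁ r₂ ⊆ Ioi 0 := fun ρ hρ => hr₁.trans hρ.1
  obtain ⟨t, ht⟩ := Matrix.exists_finset_lowSet_sum_eq_empty hna (hpos.trans Ioi_subset_Ici_self)
    (Matrix.ordConnected_lowSet ordConnected_Ioo hpos hcpos hcconc) A hlower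
  refine ⟨fun i => if i ∈ t then 1 else 0, fun i => by by_cases hi : i ∈ t <;> simp [hi], ?_⟩
  simpa [ite_smul, Finset.sum_ite_mem] using Matrix.lowSet_eq_empty_iff.mp ht

/-- Théorème 5.0-4: if `c` is logarithmically concave on `(r₁, r₂)` and
`A₁, …, Aₙ` are `m × m` matrices of Laurent series converging on the annulus
`r₁ < |x| < r₂` such that `max_i ‖A_i‖(ρ) ≥ c ρ` for all `ρ ∈ (r₁, r₂)`, then there
are scalars `ε i ∈ {0, 1}` with `‖∑ i, ε i • A i‖(ρ) ≥ c ρ` for all `ρ ∈ (r₁, r₂)`. -/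
theorem exists_zero_one_combination_ge {K : Type*} [Field K]
    (abv : AbsoluteValue K ℝ) (hna : IsNonarchimedean (abv : K → ℝ))
    (r₁ r₂ : ℝ) (hr₁ : 0 < r₁) (hr : r₁ < r₂)
    (m n : ℕ)
    (A : Fin n → Matrix (Fin m) (Fin m) (ℤ → K))
    (hconv : ∀ i r' c', ∀ ρ ∈ Set.Ioo r₁ r₂,
      Tendsto (fun k : ℤ => abv (A i r' c' k) * ρ ^ k) cofinite (nhds 0))
    (c : ℝ → ℝ)
    (hcpos : ∀ ρ ∈ Set.Ioo r₁ r₂, 0 < c ρ)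
    (hcconc : ConcaveOn ℝ (Real.log '' Set.Ioo r₁ r₂)
      (fun t => Real.log (c (Real.exp t))))
    (N : Matrix (Fin m) (Fin m) (ℤ → K) → ℝ → ℝ≥0∞)
    (hN : ∀ B ρ, N B ρ =
      ⨆ r', ⨆ c', ⨆ k : ℤ, ENNReal.ofReal (abv (B r' c' k) * ρ ^ k))
    (hlower : ∀ ρ ∈ Set.Ioo r₁ r₂, ENNReal.ofReal (c ρ) ≤ ⨆ i, N (A i) ρ) :
    ∃ ε : Fin n → K, (∀ i, ε i = 0 ∨ ε i = 1) ∧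
      ∀ ρ ∈ Set.Ioo r₁ r₂, ENNReal.ofReal (c ρ) ≤ N (∑ i, ε i • A i) ρ :=
  exists_zero_one_combination_ge_general abv hna r₁ r₂ hr₁ m n A c hcpos hcconc N hN hlower
end

section
/- Let p be prime, λ ≥ 1, s ≥ 1 integers, and define integers α_{k,s} by ((x+1)^{p^λ} − 1)^s = Σ_{k=s}^{s p^λ} α_{k,s} x^k. Then for every integer δ with 0 ≤ δ ≤ λ−1 and every k, one has |α_{k,s}|_p ≤ ω^{sp + δ(p−1)s − k p^{δ+1−λ}} where ω = p^{−1/(p−1)}, i.e. v_p(α_{k,s}) ≥ (sp + δ(p−1)s − k p^{δ+1−λ})/(p−1). Moreover equality holds if k = s p^{λ−δ−1} or k = s p^{λ−δ}; in particular |α_{s p^λ, s}|_p = 1 and |α_{p^{λ−δ},1}|_p = p^{−δ}. -/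
/-!
Write `f = (X + 1) ^ p ^ λ - 1`, so that `‖f_j‖ = p ^ (v_p(j) - λ)` for `1 ≤ j ≤ p ^ λ` and
`f_j = 0` otherwise. For every integer `δ`, Bernoulli's inequality `p ^ z ≥ 1 + (p - 1) z`
(`z ∈ ℤ`, equality iff `z ∈ {0, 1}`), applied to `z = v_p(j) + δ + 1 - λ`, shows that
`‖f_j‖ ≤ ω ^ (p + δ (p - 1) - j p ^ (δ + 1 - λ))`, with equality only at `j = p ^ (λ - δ - 1)` and
`j = p ^ (λ - δ)`: these are supporting lines of the Newton polygon of `f`. Bounds of the shape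
`‖f_j‖ ≤ r ^ (a - j c)` propagate to `‖(f ^ s)_k‖ ≤ r ^ (s a - k c)` by the ultrametric inequality.
The point `m = p ^ (λ - ε)` lies on the lines `δ = ε - 1` and `δ = ε`, and for every other `j` one
of these two bounds is strict; so in the expansion of `(f ^ s)_{s m}` the term `f_m ^ s` strictly
dominates all the others and `‖(f ^ s)_{s m}‖ = ‖f_m‖ ^ s`.
-/

open Polynomial Finset.HasAntidiagonal

theorem one_add_mul_sub_one_lt_rpow {b x : ℝ} (hb : 0 < b) (hb1 : b ≠ 1) (hx : x < 0 ∨ 1 < x) :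
    1 + (b - 1) * x < b ^ x := by
  rcases hx with hx | hx
  · calc 1 + (b - 1) * x < 1 + Real.log b * x := by
          nlinarith [Real.log_lt_sub_one_of_pos hb hb1]
      _ ≤ b ^ x := by
          rw [Real.rpow_def_of_pos hb, add_comm]; exact Real.add_one_le_exp _
  · simpa [mul_comm] using
      one_add_mul_self_lt_rpow_one_add (by linarith : -1 ≤ b - 1) (sub_ne_zero.2 hb1) hx

theorem one_add_mul_sub_one_lt_zpow {b : ℝ} (hb : 0 < b) (hb1 : b ≠ 1) {z : ℤ} (h0 : z ≠ 0)
    (h1 : z ≠ 1) : 1 + (b - 1) * z < b ^ z := by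
  rw [← Real.rpow_intCast]
  refine one_add_mul_sub_one_lt_rpow hb hb1 ?_
  rcases lt_or_gt_of_ne h0 with h | h
  · exact .inl (by exact_mod_cast h)
  · exact .inr (by exact_mod_cast (lt_of_le_of_ne h (Ne.symm h1)))

theorem one_add_mul_sub_one_le_zpow {b : ℝ} (hb : 0 < b) (z : ℤ) : 1 + (b - 1) * z ≤ b ^ z := by
  rcases eq_or_ne b 1 with rfl | hb1
  · simp
  rcases eq_or_ne z 0 with rfl | h0
  · simp
  rcases eq_or_ne z 1 with rfl | h1
  · simp
  exact (one_add_mul_sub_one_lt_zpow hb hb1 h0 h1).le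

theorem one_add_mul_sub_one_le_mul_zpow {b x : ℝ} (hb : 0 < b) {v : ℕ} (hx : b ^ v ≤ x)
    (e : ℤ) : 1 + (b - 1) * (v + e) ≤ x * b ^ e := by
  calc 1 + (b - 1) * (v + e) ≤ b ^ ((v : ℤ) + e) := by
        exact_mod_cast one_add_mul_sub_one_le_zpow hb _
    _ = b ^ v * b ^ e := by rw [zpow_add₀ hb.ne', zpow_natCast]
    _ ≤ x * b ^ e := by gcongr

theorem one_add_mul_sub_one_lt_mul_zpow {b x : ℝ} (hb : 1 < b) {v : ℕ} (hx : b ^ v ≤ x) {e : ℤ}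
    (h : b ^ v < x ∨ ((v : ℤ) + e ≠ 0 ∧ (v : ℤ) + e ≠ 1)) :
    1 + (b - 1) * (v + e) < x * b ^ e := by
  have hb0 : 0 < b := zero_lt_one.trans hb
  have hsplit : b ^ ((v : ℤ) + e) = b ^ v * b ^ e := by rw [zpow_add₀ hb0.ne', zpow_natCast]
  rcases h with h | ⟨h0, h1⟩
  · calc 1 + (b - 1) * (v + e) ≤ b ^ v * b ^ e := by
          exact_mod_cast hsplit ▸ one_add_mul_sub_one_le_zpow hb0 _
      _ < x * b ^ e := by gcongr
  · calc 1 + (b - 1) * (v + e) < b ^ v * b ^ e := by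
          exact_mod_cast hsplit ▸ one_add_mul_sub_one_lt_zpow hb0 hb.ne' h0 h1
      _ ≤ x * b ^ e := by gcongr

theorem rpow_neg_one_div_sub_one_rpow_mul {b : ℝ} (hb : 1 < b) (w : ℝ) :
    (b ^ (-(1 / (b - 1)))) ^ ((b - 1) * w) = b ^ (-w) := by
  rw [← Real.rpow_mul (by positivity)]
  congr 1
  field_simp [(sub_pos.2 hb).ne']

theorem rpow_neg_one_div_sub_one_lt_one {b : ℝ} (hb : 1 < b) : b ^ (-(1 / (b - 1))) < 1 :=
  Real.rpow_lt_one_of_one_lt_of_neg hb (neg_neg_of_pos (one_div_pos.2 (sub_pos.2 hb)))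

namespace IsUltrametricDist

theorem norm_sum_lt_of_forall_lt {ι M : Type*} [SeminormedAddCommGroup M] [IsUltrametricDist M]
    {s : Finset ι} {f : ι → M} {C : ℝ} (hC : 0 < C) (h : ∀ i ∈ s, ‖f i‖ < C) :
    ‖∑ i ∈ s, f i‖ < C := by
  rcases s.eq_empty_or_nonempty with rfl | hs
  · simpa using hC
  obtain ⟨i, hi, hle⟩ := exists_norm_finsetSum_le_of_nonempty hs f
  exact hle.trans_lt (h i hi)

end IsUltrametricDist

namespace Polynomial

variable {K : Type*} [NormedField K] [IsUltrametricDist K] {f : K[X]} {r : ℝ}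

theorem norm_coeff_pow_le_rpow (hr : 0 < r) {a c : ℝ} (hf : ∀ j, ‖f.coeff j‖ ≤ r ^ (a - j * c))
    (s k : ℕ) : ‖(f ^ s).coeff k‖ ≤ r ^ (s * a - k * c) := by
  induction s generalizing k with
  | zero => rcases eq_or_ne k 0 with rfl | hk <;> simp [coeff_one, *, Real.rpow_nonneg hr.le]
  | succ s ih =>
    rw [pow_succ, coeff_mul]
    refine IsUltrametricDist.norm_sum_le_of_forall_le_of_nonneg (by positivity) fun x hx => ?_
    rw [mem_antidiagonal] at hx
    calc ‖(f ^ s).coeff x.1 * f.coeff x.2‖ = ‖(f ^ s).coeff x.1‖ * ‖f.coeff x.2‖ := norm_mul _ _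
      _ ≤ r ^ (s * a - x.1 * c) * r ^ (a - x.2 * c) :=
          mul_le_mul (ih _) (hf _) (norm_nonneg _) (by positivity)
      _ = r ^ ((s + 1 : ℕ) * a - k * c) := by
          rw [← Real.rpow_add hr, ← hx]; push_cast; ring_nf

theorem norm_coeff_pow_mul_eq_pow {ι : Type*} (hr : 0 < r) {a c : ι → ℝ} {m : ℕ}
    (hf : ∀ i j, ‖f.coeff j‖ ≤ r ^ (a i - j * c i))
    (hm : ∀ i, ‖f.coeff m‖ = r ^ (a i - m * c i))
    (hlt : ∀ j ≠ m, ∃ i, ‖f.coeff j‖ < r ^ (a i - j * c i)) (s : ℕ) :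
    ‖(f ^ s).coeff (s * m)‖ = ‖f.coeff m‖ ^ s := by
  induction s with
  | zero => simp
  | succ s ih =>
    have hmem : (s * m, m) ∈ antidiagonal ((s + 1) * m) := by rw [mem_antidiagonal]; ring
    rw [pow_succ, coeff_mul, ← Finset.add_sum_erase _ _ hmem]
    have hmain : ‖(f ^ s).coeff (s * m) * f.coeff m‖ = ‖f.coeff m‖ ^ (s + 1) := by
      rw [norm_mul, ih, pow_succ]
    have hrest : ‖∑ x ∈ (antidiagonal ((s + 1) * m)).erase (s * m, m),
        (f ^ s).coeff x.1 * f.coeff x.2‖ < ‖f.coeff m‖ ^ (s + 1) := by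
      obtain ⟨i₀, -⟩ := hlt (m + 1) m.succ_ne_self
      refine IsUltrametricDist.norm_sum_lt_of_forall_lt
        (pow_pos (hm i₀ ▸ Real.rpow_pos_of_pos hr _) _) fun x hx => ?_
      obtain ⟨hne, hx⟩ := Finset.mem_erase.1 hx
      rw [mem_antidiagonal] at hx
      have hx2 : x.2 ≠ m := by
        rintro h2
        exact hne (Prod.ext (by rw [h2] at hx; linarith) h2)
      obtain ⟨i, hi⟩ := hlt x.2 hx2
      calc ‖(f ^ s).coeff x.1 * f.coeff x.2‖ = ‖(f ^ s).coeff x.1‖ * ‖f.coeff x.2‖ := norm_mul _ _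
        _ < r ^ (s * a i - x.1 * c i) * r ^ (a i - x.2 * c i) :=
          mul_lt_mul' (norm_coeff_pow_le_rpow hr (hf i) s x.1) hi (norm_nonneg _)
            (Real.rpow_pos_of_pos hr _)
        _ = ‖f.coeff m‖ ^ (s + 1) := by
          rw [hm i, ← Real.rpow_natCast, ← Real.rpow_mul hr.le, ← Real.rpow_add hr]
          congr 1
          have hx' : (x.1 : ℝ) + x.2 = (s + 1) * m := by exact_mod_cast hx
          push_cast
          linear_combination (-(c i)) * hx'
    rw [IsUltrametricDist.norm_add_eq_max_of_norm_ne_norm (hmain ▸ hrest.ne'), hmain,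
      max_eq_left (hmain ▸ hrest.le)]

end Polynomial

theorem coeff_X_add_one_pow_sub_one {R : Type*} [CommRing R] (n j : ℕ) :
    ((X + 1 : R[X]) ^ n - 1).coeff j = if j = 0 then 0 else (n.choose j : R) := by
  rw [coeff_sub, coeff_X_add_one_pow, coeff_one]
  split_ifs with h <;> simp [h]

theorem coeff_X_add_one_pow_sub_one_eq_zero {R : Type*} [CommRing R] {n j : ℕ} (h : j = 0 ∨ n < j) :
    ((X + 1 : R[X]) ^ n - 1).coeff j = 0 := by
  rw [coeff_X_add_one_pow_sub_one]
  rcases h with rfl | h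
  · rw [if_pos rfl]
  · rw [Nat.choose_eq_zero_of_lt h, Nat.cast_zero, ite_self]

theorem Padic.norm_natCast_eq_rpow {p : ℕ} [Fact p.Prime] {n : ℕ} (hn : n ≠ 0) :
    ‖(n : ℚ_[p])‖ = (p : ℝ) ^ (-(padicValNat p n : ℝ)) := by
  rw [Padic.norm_eq_zpow_neg_valuation (by exact_mod_cast hn), Padic.valuation_natCast,
    ← Real.rpow_intCast]
  simp

section

variable {p : ℕ} [hp : Fact p.Prime]

local notation "ω" => ((p : ℝ) ^ (-(1 / ((p : ℝ) - 1))))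

theorem norm_coeff_X_add_one_pow_prime_pow_sub_one {lam j : ℕ} (hj0 : j ≠ 0) (hj : j ≤ p ^ lam) :
    ‖((X + 1 : ℚ_[p][X]) ^ (p ^ lam) - 1).coeff j‖ =
      ω ^ ((p - 1) * (lam - padicValNat p j : ℝ)) := by
  have hv : padicValNat p j ≤ lam := (Nat.pow_le_pow_iff_right hp.out.one_lt).1
    ((Nat.le_of_dvd (Nat.pos_of_ne_zero hj0) pow_padicValNat_dvd).trans hj)
  rw [coeff_X_add_one_pow_sub_one, if_neg hj0, Padic.norm_natCast_eq_rpow (Nat.choose_pos hj).ne',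
    rpow_neg_one_div_sub_one_rpow_mul (by exact_mod_cast hp.out.one_lt),
    ← Nat.factorization_def _ hp.out, Nat.factorization_choose_prime_pow hp.out hj hj0,
    Nat.factorization_def _ hp.out, Nat.cast_sub hv]

theorem norm_coeff_X_add_one_pow_prime_pow_sub_one_le (lam : ℕ) (δ : ℤ) (j : ℕ) :
    ‖((X + 1 : ℚ_[p][X]) ^ (p ^ lam) - 1).coeff j‖ ≤
      ω ^ ((p + δ * (p - 1) : ℝ) - j * (p : ℝ) ^ ((δ : ℝ) + 1 - lam)) := by
  have hp1 : (1 : ℝ) < p := by exact_mod_cast hp.out.one_lt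
  by_cases hj : j ≠ 0 ∧ j ≤ p ^ lam
  swap
  · rw [coeff_X_add_one_pow_sub_one_eq_zero (by omega), norm_zero]; positivity
  rw [norm_coeff_X_add_one_pow_prime_pow_sub_one hj.1 hj.2,
    Real.rpow_le_rpow_left_iff_of_base_lt_one (by positivity) (rpow_neg_one_div_sub_one_lt_one hp1)]
  have hc : (p : ℝ) ^ ((δ : ℝ) + 1 - lam) = (p : ℝ) ^ (δ + 1 - lam : ℤ) := by
    rw [← Real.rpow_intCast]; push_cast; rfl
  have := one_add_mul_sub_one_le_mul_zpow (x := j) (by positivity)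
    (by exact_mod_cast Nat.le_of_dvd (Nat.pos_of_ne_zero hj.1) pow_padicValNat_dvd) (δ + 1 - lam)
  rw [hc]
  push_cast at this
  linarith

theorem norm_coeff_X_add_one_pow_prime_pow_sub_one_lt (lam : ℕ) (δ : ℤ) {j : ℕ}
    (hj : ∀ v : ℕ, j = p ^ v → (v : ℤ) + δ + 1 - lam ≠ 0 ∧ (v : ℤ) + δ + 1 - lam ≠ 1) :
    ‖((X + 1 : ℚ_[p][X]) ^ (p ^ lam) - 1).coeff j‖ <
      ω ^ ((p + δ * (p - 1) : ℝ) - j * (p : ℝ) ^ ((δ : ℝ) + 1 - lam)) := by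
  have hp1 : (1 : ℝ) < p := by exact_mod_cast hp.out.one_lt
  by_cases hj0 : j ≠ 0 ∧ j ≤ p ^ lam
  swap
  · rw [coeff_X_add_one_pow_sub_one_eq_zero (by omega), norm_zero]; positivity
  rw [norm_coeff_X_add_one_pow_prime_pow_sub_one hj0.1 hj0.2,
    Real.rpow_lt_rpow_left_iff_of_base_lt_one (by positivity) (rpow_neg_one_div_sub_one_lt_one hp1)]
  have hc : (p : ℝ) ^ ((δ : ℝ) + 1 - lam) = (p : ℝ) ^ (δ + 1 - lam : ℤ) := by
    rw [← Real.rpow_intCast]; push_cast; rfl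
  have hle : p ^ padicValNat p j ≤ j := Nat.le_of_dvd (Nat.pos_of_ne_zero hj0.1) pow_padicValNat_dvd
  have := one_add_mul_sub_one_lt_mul_zpow (x := j) (e := δ + 1 - lam) hp1
    (by exact_mod_cast hle) <| by
    rcases hle.lt_or_eq with hlt | heq
    · exact .inl (by exact_mod_cast hlt)
    · have := hj _ heq.symm; exact .inr (by omega)
  rw [hc]
  push_cast at this
  linarith

theorem norm_coeff_X_add_one_pow_prime_pow_sub_one_at_prime_pow {lam ε : ℕ} (hε : ε ≤ lam) :
    ‖((X + 1 : ℚ_[p][X]) ^ (p ^ lam) - 1).coeff (p ^ (lam - ε))‖ = ω ^ ((p - 1) * ε : ℝ) := by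
  rw [norm_coeff_X_add_one_pow_prime_pow_sub_one (pow_pos hp.out.pos _).ne'
    (Nat.pow_le_pow_right hp.out.pos (Nat.sub_le _ _)), padicValNat.prime_pow, Nat.cast_sub hε]
  ring_nf

theorem norm_coeff_X_add_one_pow_prime_pow_sub_one_at_prime_pow_eq_line {lam ε : ℕ} (hε : ε ≤ lam)
    {δ : ℤ} (hδ : δ = ε - 1 ∨ δ = ε) :
    ‖((X + 1 : ℚ_[p][X]) ^ (p ^ lam) - 1).coeff (p ^ (lam - ε))‖ =
      ω ^ ((p + δ * (p - 1) : ℝ) - (p ^ (lam - ε) : ℕ) * (p : ℝ) ^ ((δ : ℝ) + 1 - lam)) := by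
  have hp0 : (0 : ℝ) < p := by exact_mod_cast hp.out.pos
  rw [norm_coeff_X_add_one_pow_prime_pow_sub_one_at_prime_pow hε, Nat.cast_pow, ← Real.rpow_natCast,
    ← Real.rpow_add hp0, Nat.cast_sub hε]
  congr 1
  rcases hδ with rfl | rfl
  · rw [show ((lam : ℝ) - ε) + (((ε - 1 : ℤ) : ℝ) + 1 - lam) = 0 by push_cast; ring, Real.rpow_zero]
    push_cast; ring
  · rw [show ((lam : ℝ) - ε) + (((ε : ℤ) : ℝ) + 1 - lam) = 1 by push_cast; ring, Real.rpow_one]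
    push_cast; ring

theorem norm_coeff_pow_X_add_one_pow_prime_pow_sub_one_at_mul_prime_pow {lam ε : ℕ} (hε : ε ≤ lam)
    (s : ℕ) :
    ‖(((X + 1 : ℚ_[p][X]) ^ (p ^ lam) - 1) ^ s).coeff (s * p ^ (lam - ε))‖ =
      ‖((X + 1 : ℚ_[p][X]) ^ (p ^ lam) - 1).coeff (p ^ (lam - ε))‖ ^ s := by
  have hp0 : (0 : ℝ) < p := by exact_mod_cast hp.out.pos
  refine norm_coeff_pow_mul_eq_pow (ι := {δ : ℤ // δ = ε - 1 ∨ δ = ε}) (Real.rpow_pos_of_pos hp0 _)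
    (fun δ => norm_coeff_X_add_one_pow_prime_pow_sub_one_le lam δ)
    (fun δ => norm_coeff_X_add_one_pow_prime_pow_sub_one_at_prime_pow_eq_line hε δ.2)
    (fun j hj => ?_) s
  have hinj := Nat.pow_right_injective hp.out.two_le
  -- `p ^ (λ - ε - 1)` attains the bound of the line `δ = ε`, but not that of `δ = ε - 1`.
  by_cases hleft : ∃ v, j = p ^ v ∧ v + ε + 1 = lam
  · obtain ⟨v, rfl, hv⟩ := hleft
    refine ⟨⟨ε - 1, .inl rfl⟩,
      norm_coeff_X_add_one_pow_prime_pow_sub_one_lt lam (ε - 1) fun w hw => ?_⟩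
    have := hinj hw
    omega
  · refine ⟨⟨ε, .inr rfl⟩, norm_coeff_X_add_one_pow_prime_pow_sub_one_lt lam ε fun w hw => ?_⟩
    have : w + ε ≠ lam := fun h => hj (by rw [hw, ← h, Nat.add_sub_cancel])
    have : w + ε + 1 ≠ lam := fun h => hleft ⟨w, hw, h⟩
    omega

end

/-- Lemme 5.2-1: estimates on the coefficients `α_{k,s}` of
`((x+1)^{p^λ} − 1)^s = Σ_k α_{k,s} x^k`.  For `0 ≤ δ ≤ λ−1` one has
`|α_{k,s}|_p ≤ ω^{sp + δ(p−1)s − k p^{δ+1−λ}}` with `ω = p^{−1/(p−1)}`,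
with equality if `k = s p^{λ−δ−1}` or `k = s p^{λ−δ}`; in particular
`|α_{s p^λ, s}|_p = 1` and `|α_{p^{λ−δ}, 1}|_p = p^{−δ}`. -/
theorem frobenius_coeff_estimates (p : ℕ) (hp : p.Prime) (lam : ℕ) (hlam : 1 ≤ lam)
    (α : ℕ → ℕ → ℤ)
    (hα : ∀ s k : ℕ, α s k =
      ((((Polynomial.X + 1 : Polynomial ℤ) ^ (p ^ lam) - 1) ^ s).coeff k))
    (ω : ℝ) (hω : ω = (p : ℝ) ^ (-(1 / ((p : ℝ) - 1)))) :
    ∀ s : ℕ, 1 ≤ s → ∀ δ : ℕ, δ ≤ lam - 1 →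
      (∀ k : ℕ, ((padicNorm p ((α s k : ℚ)) : ℝ)) ≤
        ω ^ ((s : ℝ) * p + (δ : ℝ) * ((p : ℝ) - 1) * s
          - (k : ℝ) * (p : ℝ) ^ ((δ : ℝ) + 1 - (lam : ℝ)))) ∧
      (∀ k : ℕ, (k = s * p ^ (lam - δ - 1) ∨ k = s * p ^ (lam - δ)) →
        ((padicNorm p ((α s k : ℚ)) : ℝ)) =
        ω ^ ((s : ℝ) * p + (δ : ℝ) * ((p : ℝ) - 1) * s
          - (k : ℝ) * (p : ℝ) ^ ((δ : ℝ) + 1 - (lam : ℝ)))) ∧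
      ((padicNorm p ((α s (s * p ^ lam) : ℚ)) : ℝ) = 1) ∧
      ((padicNorm p ((α 1 (p ^ (lam - δ)) : ℚ)) : ℝ) = (p : ℝ) ^ (-(δ : ℝ))) := by
  have : Fact p.Prime := ⟨hp⟩
  subst hω
  have hω0 : (0 : ℝ) < (p : ℝ) ^ (-(1 / ((p : ℝ) - 1))) :=
    Real.rpow_pos_of_pos (by exact_mod_cast hp.pos) _
  have hnorm (s k : ℕ) : (padicNorm p (α s k : ℚ) : ℝ) =
      ‖(((X + 1 : ℚ_[p][X]) ^ (p ^ lam) - 1) ^ s).coeff k‖ := by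
    rw [hα, ← Padic.eq_padicNorm, Rat.cast_intCast, ← eq_intCast (Int.castRingHom ℚ_[p]),
      ← coeff_map]
    simp
  have hexp (s k : ℕ) (δ : ℕ) : (s : ℝ) * p + (δ : ℝ) * ((p : ℝ) - 1) * s
      - (k : ℝ) * (p : ℝ) ^ ((δ : ℝ) + 1 - (lam : ℝ)) =
      s * (p + ((δ : ℤ) : ℝ) * (p - 1)) - k * (p : ℝ) ^ (((δ : ℤ) : ℝ) + 1 - lam) := by
    push_cast; ring
  intro s _ δ hδ
  refine ⟨fun k => ?_, fun k hk => ?_, ?_, ?_⟩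
  · rw [hnorm, hexp]
    exact norm_coeff_pow_le_rpow hω0 (norm_coeff_X_add_one_pow_prime_pow_sub_one_le lam δ) s k
  · obtain ⟨ε, hε, rfl, hδε⟩ :
        ∃ ε ≤ lam, k = s * p ^ (lam - ε) ∧ ((δ : ℤ) = ε - 1 ∨ (δ : ℤ) = ε) := by
      rcases hk with rfl | rfl
      · exact ⟨δ + 1, by omega, by rw [Nat.sub_sub], .inl (by push_cast; ring)⟩
      · exact ⟨δ, by omega, rfl, .inr rfl⟩
    rw [hnorm, norm_coeff_pow_X_add_one_pow_prime_pow_sub_one_at_mul_prime_pow hε,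
      norm_coeff_X_add_one_pow_prime_pow_sub_one_at_prime_pow_eq_line hε hδε, ← Real.rpow_natCast,
      ← Real.rpow_mul hω0.le, hexp]
    congr 1
    push_cast
    ring
  · have h := norm_coeff_pow_X_add_one_pow_prime_pow_sub_one_at_mul_prime_pow (p := p)
      (Nat.zero_le lam) s
    rw [norm_coeff_X_add_one_pow_prime_pow_sub_one_at_prime_pow (Nat.zero_le _), Nat.sub_zero] at h
    rw [hnorm, h]
    simp
  · rw [hnorm, pow_one, norm_coeff_X_add_one_pow_prime_pow_sub_one_at_prime_pow (by omega),
      rpow_neg_one_div_sub_one_rpow_mul (by exact_mod_cast hp.one_lt)]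
end

section
/- Let K be a locally compact nonarchimedean valued field and 0 < r. If (f_n) is a sequence of power series over K, each converging on the open disk |x| < r, such that for every ρ < r the norms |f_n|_ρ = sup_k |a_{n,k}| ρ^k are bounded uniformly in n, then (f_n) admits a subsequence that converges (coefficient-wise and uniformly in the norm |·|_ρ for every ρ < r) to a power series converging on |x| < r. -/
open scoped ENNReal
open Filter Topology

/-!
Boundedness at radius `r / 2` puts, for each `k`, the `k`-th coefficients of all the series in a
compact ball, so a Tychonoff-type sequential compactness argument yields a coefficientwise convergent
subsequence. Given `ρ < ρ' < r`, the uniform bound `C` at `ρ'` passes to the limit and dominates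
`‖a n k - b k‖ ρ ^ k` by `2 C (ρ / ρ') ^ k` uniformly in `n`; this geometric tail upgrades
coefficientwise convergence to convergence in `|·|_ρ`.
-/

theorem ENNReal.tendsto_iSup_of_le_of_tendsto_cofinite {α ι : Type*} {l : Filter α}
    {f : α → ι → ℝ≥0∞} {g : ι → ℝ≥0∞} (hf : ∀ i, Tendsto (f · i) l (𝓝 0))
    (hfg : ∀ x i, f x i ≤ g i) (hg : Tendsto g cofinite (𝓝 0)) :
    Tendsto (fun x => ⨆ i, f x i) l (𝓝 0) := by
  refine ENNReal.tendsto_nhds_zero.2 fun ε hε => ?_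
  have hfin : {i | ¬ g i ≤ ε}.Finite := ENNReal.tendsto_nhds_zero.1 hg ε hε
  filter_upwards [(eventually_all_finite hfin).2 fun i _ =>
    ENNReal.tendsto_nhds_zero.1 (hf i) ε hε] with x hx
  refine iSup_le fun i => ?_
  by_cases hi : g i ≤ ε
  · exact (hfg x i).trans hi
  · exact hx i hi

theorem exists_strictMono_tendsto_pi_of_norm_le {ι E : Type*} [Countable ι]
    [SeminormedAddCommGroup E] [ProperSpace E] {x : ℕ → ι → E} {M : ι → ℝ}
    (hx : ∀ n i, ‖x n i‖ ≤ M i) :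
    ∃ φ : ℕ → ℕ, StrictMono φ ∧
      ∃ b : ι → E, ∀ i, Tendsto (fun n => x (φ n) i) atTop (𝓝 (b i)) := by
  have hcomp : IsCompact (Set.univ.pi fun i => Metric.closedBall (0 : E) (M i)) :=
    isCompact_univ_pi fun i => isCompact_closedBall 0 (M i)
  obtain ⟨b, -, φ, hφ, hb⟩ := hcomp.isSeqCompact fun n i _ => mem_closedBall_zero_iff.2 (hx n i)
  exact ⟨φ, hφ, b, tendsto_pi_nhds.1 hb⟩

section PowerSeries

variable {E : Type*} [SeminormedAddCommGroup E] {ρ ρ' C : ℝ}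

theorem norm_mul_pow_le_of_tendsto {a : ℕ → ℕ → E} {b : ℕ → E}
    (hab : ∀ k, Tendsto (fun n => a n k) atTop (𝓝 (b k))) (hC : ∀ n k, ‖a n k‖ * ρ ^ k ≤ C)
    (k : ℕ) : ‖b k‖ * ρ ^ k ≤ C :=
  le_of_tendsto' ((hab k).norm.mul_const _) fun n => hC n k

theorem norm_mul_pow_le_mul_div_pow {c : E} (hρ : 0 ≤ ρ) (hρ' : 0 < ρ') {k : ℕ}
    (hC : ‖c‖ * ρ' ^ k ≤ C) : ‖c‖ * ρ ^ k ≤ C * (ρ / ρ') ^ k :=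
  calc ‖c‖ * ρ ^ k = ‖c‖ * ρ' ^ k * (ρ / ρ') ^ k := by
        rw [mul_assoc, ← mul_pow, mul_div_cancel₀ _ hρ'.ne']
    _ ≤ C * (ρ / ρ') ^ k := by gcongr

theorem tendsto_mul_div_pow_zero (hρ : 0 ≤ ρ) (hρρ' : ρ < ρ') :
    Tendsto (fun k : ℕ => C * (ρ / ρ') ^ k) atTop (𝓝 0) := by
  simpa using (tendsto_pow_atTop_nhds_zero_of_lt_one (div_nonneg hρ (hρ.trans hρρ'.le))
    ((div_lt_one (hρ.trans_lt hρρ')).2 hρρ')).const_mul C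

theorem tendsto_norm_mul_pow_of_norm_mul_pow_le {c : ℕ → E} (hρ : 0 ≤ ρ) (hρρ' : ρ < ρ')
    (hC : ∀ k, ‖c k‖ * ρ' ^ k ≤ C) : Tendsto (fun k => ‖c k‖ * ρ ^ k) atTop (𝓝 0) :=
  squeeze_zero (fun k => mul_nonneg (norm_nonneg _) (pow_nonneg hρ k))
    (fun k => norm_mul_pow_le_mul_div_pow hρ (hρ.trans_lt hρρ') (hC k))
    (tendsto_mul_div_pow_zero hρ hρρ')

theorem tendsto_iSup_norm_sub_mul_pow {a : ℕ → ℕ → E} {b : ℕ → E}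
    (hab : ∀ k, Tendsto (fun n => a n k) atTop (𝓝 (b k))) (hρ : 0 ≤ ρ) (hρρ' : ρ < ρ')
    (hC : ∀ n k, ‖a n k‖ * ρ' ^ k ≤ C) :
    Tendsto (fun n => ⨆ k, ENNReal.ofReal (‖a n k - b k‖ * ρ ^ k)) atTop (𝓝 0) := by
  have hsub : ∀ n k, ‖a n k - b k‖ * ρ' ^ k ≤ C + C := fun n k =>
    calc ‖a n k - b k‖ * ρ' ^ k ≤ ‖a n k‖ * ρ' ^ k + ‖b k‖ * ρ' ^ k := by
          rw [← add_mul]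
          exact mul_le_mul_of_nonneg_right (norm_sub_le _ _) (pow_nonneg (hρ.trans hρρ'.le) k)
      _ ≤ C + C := add_le_add (hC n k) (norm_mul_pow_le_of_tendsto hab hC k)
  refine ENNReal.tendsto_iSup_of_le_of_tendsto_cofinite (fun k => ?_)
    (fun n k => ENNReal.ofReal_le_ofReal
      (norm_mul_pow_le_mul_div_pow hρ (hρ.trans_lt hρρ') (hsub n k)))
    (Nat.cofinite_eq_atTop ▸ ENNReal.ofReal_zero ▸
      ENNReal.tendsto_ofReal (tendsto_mul_div_pow_zero hρ hρρ'))
  have hk : Tendsto (fun n => ‖a n k - b k‖ * ρ ^ k) atTop (𝓝 0) := by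
    simpa using ((hab k).sub_const (b k)).norm.mul_const (ρ ^ k)
  exact ENNReal.ofReal_zero ▸ ENNReal.tendsto_ofReal hk

end PowerSeries

theorem exists_subseq_tendsto_of_bounded_general {K : Type*} [NontriviallyNormedField K]
    [LocallyCompactSpace K]
    (r : ℝ) (hr : 0 < r) (a : ℕ → ℕ → K)
    (hbdd : ∀ ρ : ℝ, 0 < ρ → ρ < r → ∃ C : ℝ, ∀ n k, ‖a n k‖ * ρ ^ k ≤ C) :
    ∃ φ : ℕ → ℕ, StrictMono φ ∧ ∃ b : ℕ → K,
      (∀ ρ : ℝ, 0 < ρ → ρ < r →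
        Tendsto (fun k => ‖b k‖ * ρ ^ k) atTop (nhds 0)) ∧
      (∀ k : ℕ, Tendsto (fun n => a (φ n) k) atTop (nhds (b k))) ∧
      (∀ ρ : ℝ, 0 < ρ → ρ < r →
        Tendsto (fun n => ⨆ k : ℕ, ENNReal.ofReal (‖a (φ n) k - b k‖ * ρ ^ k))
          atTop (nhds 0)) := by
  have : ProperSpace K := .of_locallyCompactSpace K
  obtain ⟨C₀, hC₀⟩ := hbdd (r / 2) (by positivity) (by linarith)
  obtain ⟨φ, hφ, b, hb⟩ := exists_strictMono_tendsto_pi_of_norm_le (x := a)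
    (M := fun k => C₀ / (r / 2) ^ k) fun n k => by
      rw [le_div_iff₀ (by positivity)]; exact hC₀ n k
  have hbdd' : ∀ ρ, 0 < ρ → ρ < r → ∃ ρ', ρ < ρ' ∧ ∃ C, ∀ n k, ‖a n k‖ * ρ' ^ k ≤ C :=
    fun ρ hρ hρr =>
      let ⟨ρ', hρρ', hρ'r⟩ := exists_between hρr
      ⟨ρ', hρρ', hbdd ρ' (hρ.trans hρρ') hρ'r⟩
  refine ⟨φ, hφ, b, fun ρ hρ hρr => ?_, hb, fun ρ hρ hρr => ?_⟩
  · obtain ⟨ρ', hρρ', C, hC⟩ := hbdd' ρ hρ hρr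
    exact tendsto_norm_mul_pow_of_norm_mul_pow_le hρ.le hρρ'
      (norm_mul_pow_le_of_tendsto hb fun n k => hC (φ n) k)
  · obtain ⟨ρ', hρρ', C, hC⟩ := hbdd' ρ hρ hρr
    exact tendsto_iSup_norm_sub_mul_pow hb hρ.le hρρ' fun n k => hC (φ n) k

/-- Lemme 6.1-2: over a locally compact nonarchimedean field, a sequence of power
series converging on the open disk `|x| < r` which is bounded in every norm
`|·|_ρ`, `ρ < r`, has a subsequence converging (coefficient-wise and in each norm
`|·|_ρ`) to a power series converging on `|x| < r`. -/
theorem exists_subseq_tendsto_of_bounded {K : Type*} [NontriviallyNormedField K]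
    [CompleteSpace K] [LocallyCompactSpace K] [IsUltrametricDist K]
    (r : ℝ) (hr : 0 < r) (a : ℕ → ℕ → K)
    (hconv : ∀ n : ℕ, ∀ ρ : ℝ, 0 < ρ → ρ < r →
      Tendsto (fun k => ‖a n k‖ * ρ ^ k) atTop (nhds 0))
    (hbdd : ∀ ρ : ℝ, 0 < ρ → ρ < r → ∃ C : ℝ, ∀ n k, ‖a n k‖ * ρ ^ k ≤ C) :
    ∃ φ : ℕ → ℕ, StrictMono φ ∧ ∃ b : ℕ → K,
      (∀ ρ : ℝ, 0 < ρ → ρ < r →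
        Tendsto (fun k => ‖b k‖ * ρ ^ k) atTop (nhds 0)) ∧
      (∀ k : ℕ, Tendsto (fun n => a (φ n) k) atTop (nhds (b k))) ∧
      (∀ ρ : ℝ, 0 < ρ → ρ < r →
        Tendsto (fun n => ⨆ k : ℕ, ENNReal.ofReal (‖a (φ n) k - b k‖ * ρ ^ k))
          atTop (nhds 0)) :=
  exists_subseq_tendsto_of_bounded_general r hr a hbdd
end

section
/- Let p be prime and K a nonarchimedean valued field with |p| = p^{−1}, and set ω = p^{−1/(p−1)}. For t, x ∈ K with ω·|t| < |x − t| < |t|, one has |x^p − t^p| = |x − t|^p. -/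
/-- For `p` prime and `|p| = p^{−1}`, if `ω·|t| < |x − t| < |t|` with
`ω = p^{−1/(p−1)}`, then `|x^p − t^p| = |x − t|^p`. -/
theorem abv_pow_sub_pow_frobenius {K : Type*} [Field K]
    (abv : AbsoluteValue K ℝ) (hna : IsNonarchimedean (abv : K → ℝ))
    (p : ℕ) (hp : p.Prime) (hvp : abv (p : K) = ((p : ℝ))⁻¹)
    (ω : ℝ) (hω : ω = (p : ℝ) ^ (-(1 / ((p : ℝ) - 1))))
    (t x : K) (h1 : ω * abv t < abv (x - t)) (h2 : abv (x - t) < abv t) :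
    abv (x ^ p - t ^ p) = abv (x - t) ^ p := by
  set u := x - t with hu
  have hp1 : 1 < p := hp.one_lt
  have hppos : (0 : ℝ) < p := by exact_mod_cast hp.pos
  have hωpos : 0 < ω := by rw [hω]; positivity
  have hupos : 0 < abv u := lt_of_le_of_lt (by positivity) h1
  have htpos : 0 < abv t := lt_trans hupos h2
  -- ω ≤ 1
  have hω1 : ω ≤ 1 := by
    rw [hω]
    have hgt : (1:ℝ) < p := by exact_mod_cast hp1
    exact Real.rpow_le_one_of_one_le_of_nonpos hgt.le
      (by rw [neg_nonpos]; apply div_nonneg zero_le_one; linarith)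
  -- ω ^ (p-1) = p⁻¹
  have hωpow : ω ^ (p - 1) = ((p : ℝ))⁻¹ := by
    rw [hω, ← Real.rpow_natCast ((p:ℝ) ^ (-(1 / ((p : ℝ) - 1)))) (p-1),
      ← Real.rpow_mul hppos.le]
    have : ((p - 1 : ℕ) : ℝ) = (p : ℝ) - 1 := by
      push_cast [Nat.cast_sub hp1.le]; ring
    rw [this]
    have hne : (p : ℝ) - 1 ≠ 0 := by
      have : (1:ℝ) < p := by exact_mod_cast hp1
      linarith
    rw [neg_mul, div_mul_cancel₀ _ hne, Real.rpow_neg_one]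
  set n := p - 1 with hn
  have hpn : p = n + 1 := (Nat.succ_pred_eq_of_pos hp.pos).symm
  -- key identity
  have key : x ^ p = t ^ p + u ^ p +
      ∑ i ∈ Finset.range n, u ^ (i+1) * t ^ (p - (i+1)) * (p.choose (i+1) : K) := by
    have hx : x = u + t := by rw [hu]; ring
    rw [hx, add_pow]
    rw [hpn, Finset.sum_range_succ, Finset.sum_range_succ']
    simp [hpn, Nat.choose_self, Nat.choose_zero_right]
    ring
  -- bound each term
  have hterm : ∀ i ∈ Finset.range n,
      abv (u ^ (i+1) * t ^ (p - (i+1)) * (p.choose (i+1) : K)) < abv u ^ p := by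
    intro i hi
    rw [Finset.mem_range] at hi
    set j := i + 1 with hj
    have hj1 : 1 ≤ j := Nat.le_add_left 1 i
    have hjp : j < p := by omega
    -- abv of choose ≤ p⁻¹
    have hdvd : p ∣ p.choose j := Nat.Prime.dvd_choose_self hp (by omega) hjp
    obtain ⟨m, hm⟩ := hdvd
    have hc : abv ((p.choose j : K)) ≤ ((p:ℝ))⁻¹ := by
      rw [hm]
      push_cast
      rw [map_mul, hvp]
      have hm1 : abv ((m : K)) ≤ 1 := by
        have := IsNonarchimedean.nmul_le (f := abv) hna (n := m) (a := (1 : K))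
        simpa using this
      calc ((p:ℝ))⁻¹ * abv (m : K) ≤ ((p:ℝ))⁻¹ * 1 := by
            apply mul_le_mul_of_nonneg_left hm1 (by positivity)
        _ = ((p:ℝ))⁻¹ := mul_one _
    rw [map_mul, map_mul, map_pow, map_pow]
    have hmain : ((p:ℝ))⁻¹ * abv t ^ (p - j) < abv u ^ (p - j) := by
      have h3 : (ω * abv t) ^ (p - j) < abv u ^ (p - j) :=
        pow_lt_pow_left₀ h1 (by positivity) (by omega)
      rw [mul_pow] at h3
      have h4 : ((p:ℝ))⁻¹ * abv t ^ (p - j) ≤ ω ^ (p - j) * abv t ^ (p - j) := by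
        apply mul_le_mul_of_nonneg_right _ (by positivity)
        rw [← hωpow]
        exact pow_le_pow_of_le_one hωpos.le hω1 (by omega)
      exact lt_of_le_of_lt h4 h3
    calc abv u ^ j * abv t ^ (p - j) * abv ((p.choose j : K))
        ≤ abv u ^ j * abv t ^ (p - j) * ((p:ℝ))⁻¹ := by
          apply mul_le_mul_of_nonneg_left hc (by positivity)
      _ = abv u ^ j * (((p:ℝ))⁻¹ * abv t ^ (p - j)) := by ring
      _ < abv u ^ j * abv u ^ (p - j) := by
          apply mul_lt_mul_of_pos_left hmain (by positivity)
      _ = abv u ^ p := by rw [← pow_add]; congr 1; omega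
  -- bound the sum
  set S := ∑ i ∈ Finset.range n, u ^ (i+1) * t ^ (p - (i+1)) * (p.choose (i+1) : K) with hS
  have hne : (Finset.range n).Nonempty := by
    rw [Finset.nonempty_range_iff]; omega
  obtain ⟨b, hb, hble⟩ := IsNonarchimedean.finset_image_add_of_nonempty (f := abv) hna
    (fun i => u ^ (i+1) * t ^ (p - (i+1)) * (p.choose (i+1) : K)) hne
  have hSlt : abv S < abv u ^ p := lt_of_le_of_lt hble (hterm b hb)
  have hrw : x ^ p - t ^ p = u ^ p + S := by rw [key]; ring
  rw [hrw]
  have := IsNonarchimedean.add_eq_max_of_ne (f := abv) hna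
    (x := u ^ p) (y := S) (by rw [map_pow]; exact ne_of_gt hSlt)
  rw [this, map_pow, max_eq_left hSlt.le]
end

section
/- Let p be prime, h ≥ 1, q = p^h, and K a nonarchimedean valued field with |p| = p^{−1}. For t, x ∈ K with |x − t| ≤ |t|, one has |x^q − t^q| ≤ max(|x − t|^q, p^{−1}·|x − t|·|t|^{q−1}). -/
/-!
Expand `x ^ q = ((x - t) + t) ^ q` binomially. The top term is `(x - t) ^ q`; every other term
carries at least one factor `x - t` and a binomial coefficient `C(p ^ h, i)` divisible by `p`,
so has absolute value at most `p⁻¹ |x - t| |t| ^ (q - 1)`. The ultrametric inequality bounds the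
sum by its largest term.
-/

open Finset

theorem pow_sub_pow_eq_sum_range {R : Type*} [CommRing R] (x t : R) (n : ℕ) :
    x ^ n - t ^ n =
      ∑ i ∈ range n, (x - t) ^ (i + 1) * t ^ (n - (i + 1)) * (n.choose (i + 1) : R) := by
  have hexp := add_pow (x - t) t n
  rw [sub_add_cancel, sum_range_succ'] at hexp
  rw [hexp]
  simp

theorem IsNonarchimedean.apply_natCast_le_of_dvd {R S : Type*} [Semiring R] [Semiring S]
    [LinearOrder S] (abv : AbsoluteValue R S) (hna : IsNonarchimedean (abv : R → S))
    {p m : ℕ} (hpm : p ∣ m) : abv (m : R) ≤ abv (p : R) := by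
  obtain ⟨k, rfl⟩ := hpm
  rw [mul_comm, Nat.cast_mul]
  exact hna.nmul_le

theorem pow_succ_mul_pow_le_mul_pow {R : Type*} [CommSemiring R] [PartialOrder R]
    [IsOrderedRing R] {a b : R} (ha : 0 ≤ a) (hab : a ≤ b) {i n : ℕ} (hin : i < n) :
    a ^ (i + 1) * b ^ (n - (i + 1)) ≤ a * b ^ (n - 1) :=
  calc a ^ (i + 1) * b ^ (n - (i + 1))
      = a * (a ^ i * b ^ (n - (i + 1))) := by ring
    _ ≤ a * (b ^ i * b ^ (n - (i + 1))) := by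
        have hb : 0 ≤ b := ha.trans hab
        gcongr
    _ = a * b ^ (n - 1) := by rw [← pow_add]; congr 2; omega

theorem abv_pow_sub_pow_le_general {K : Type*} [Field K]
    (abv : AbsoluteValue K ℝ) (hna : IsNonarchimedean (abv : K → ℝ))
    (p : ℕ) (hp : p.Prime) (hvp : abv (p : K) = ((p : ℝ))⁻¹)
    (h : ℕ)
    (t x : K) (hxt : abv (x - t) ≤ abv t) :
    abv (x ^ (p ^ h) - t ^ (p ^ h)) ≤
      max (abv (x - t) ^ (p ^ h))
        (((p : ℝ))⁻¹ * abv (x - t) * abv t ^ (p ^ h - 1)) := by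
  rw [pow_sub_pow_eq_sum_range]
  refine (hna.apply_sum_le_sup (nonempty_range_iff.2 (pow_ne_zero h hp.ne_zero))).trans
    (sup'_le _ _ fun i hi => ?_)
  rw [map_mul, map_mul, map_pow, map_pow]
  rcases (Nat.add_one_le_of_lt (mem_range.1 hi)).eq_or_lt with htop | hlt
  · rw [htop, Nat.choose_self, Nat.cast_one, map_one, Nat.sub_self, pow_zero, mul_one, mul_one]
    exact le_max_left _ _
  · have hchoose : abv ((p ^ h).choose (i + 1) : K) ≤ (p : ℝ)⁻¹ :=
      hvp ▸ hna.apply_natCast_le_of_dvd abv (hp.dvd_choose_pow i.succ_ne_zero hlt.ne)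
    calc abv (x - t) ^ (i + 1) * abv t ^ (p ^ h - (i + 1)) * abv ((p ^ h).choose (i + 1) : K)
        ≤ abv (x - t) * abv t ^ (p ^ h - 1) * (p : ℝ)⁻¹ := by
          gcongr ?_ * ?_
          exact pow_succ_mul_pow_le_mul_pow (abv.nonneg _) hxt (mem_range.1 hi)
      _ ≤ _ := by rw [mul_comm, ← mul_assoc]; exact le_max_right _ _

/-- For `q = p^h` (`p` prime, `h ≥ 1`) and `|p| = p^{−1}`, if `|x − t| ≤ |t|` then
`|x^q − t^q| ≤ max (|x − t|^q) (p^{−1}·|x − t|·|t|^{q−1})`. -/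
theorem abv_pow_sub_pow_le {K : Type*} [Field K]
    (abv : AbsoluteValue K ℝ) (hna : IsNonarchimedean (abv : K → ℝ))
    (p : ℕ) (hp : p.Prime) (hvp : abv (p : K) = ((p : ℝ))⁻¹)
    (h : ℕ) (hh : 1 ≤ h)
    (t x : K) (hxt : abv (x - t) ≤ abv t) :
    abv (x ^ (p ^ h) - t ^ (p ^ h)) ≤
      max (abv (x - t) ^ (p ^ h))
        (((p : ℝ))⁻¹ * abv (x - t) * abv t ^ (p ^ h - 1)) :=
  abv_pow_sub_pow_le_general abv hna p hp hvp h t x hxt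
end

section
/- Let K be a complete nonarchimedean valued field, 0 ≤ r₁ < r₂, and f = Σ_{k∈ℤ} a_k x^k a Laurent series converging on the annulus r₁ < |x| < r₂. Then f decomposes uniquely as f = f₊ + f₋, where f₊ = Σ_{k≥0} a_k x^k is a power series converging on the disk |x| < r₂ and f₋ = Σ_{k<0} a_k x^k converges for |x| > r₁ and tends to 0 as |x| → ∞. Moreover |f|_ρ = max(|f₊|_ρ, |f₋|_ρ) for every ρ ∈ (r₁, r₂). -/
open scoped ENNReal
open Filter

/-!
Everything is read off the coefficients. The decomposition splits `a` by the sign of the index.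
Since `ρ ↦ ρ ^ k` increases for `k ≥ 0` and decreases for `k < 0`, decay of `‖a k‖ ρ₀ ^ k` at one
radius `ρ₀ ∈ (r₁, r₂)` gives decay of the part with `k ≥ 0` at every smaller radius and of the part
with `k < 0` at every larger one. For `ρ ≥ ρ₀` each term with `k < 0` is at most `ρ₀ / ρ` times the
same term at `ρ₀`, so `|f₋|_ρ ≤ (ρ₀ / ρ) |f₋|_ρ₀ → 0`. The identity for `|f|_ρ` is the splitting of
a supremum over `ℤ` into the suprema over `k ≥ 0` and `k < 0`.
-/

theorem existsUnique_split_add {ι M : Type*} [AddZeroClass M] (p : ι → Prop) (a : ι → M) :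
    ∃! bc : (ι → M) × (ι → M),
      (∀ i, ¬ p i → bc.1 i = 0) ∧ (∀ i, p i → bc.2 i = 0) ∧ ∀ i, a i = bc.1 i + bc.2 i := by
  classical
  refine ⟨({i | p i}.indicator a, {i | p i}ᶜ.indicator a), ⟨?_, ?_, fun i => ?_⟩, ?_⟩
  · intro i hi; simp [hi]
  · intro i hi; simp [hi]
  · by_cases hi : p i <;> simp [hi]
  · rintro ⟨b, c⟩ ⟨hb, hc, habc⟩
    ext i <;> by_cases hi : p i
    all_goals simp_all

theorem iSup_int_eq_sup {α : Type*} [CompleteLattice α] (f : ℤ → α) :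
    ⨆ k, f k = (⨆ n : ℕ, f n) ⊔ ⨆ n : ℕ, f (-((n : ℤ) + 1)) := by
  rw [← Equiv.intEquivNatSumNat.symm.iSup_comp, iSup_sum]
  rfl

theorem zpow_neg_natCast_add_one {G : Type*} [DivisionMonoid G] (x : G) (n : ℕ) :
    x ^ (-((n : ℤ) + 1)) = x⁻¹ ^ (n + 1) := by
  rw [zpow_neg, ← inv_zpow, ← Nat.cast_succ, zpow_natCast]

theorem ENNReal.iSup_ofReal_ne_top_of_tendsto {u : ℕ → ℝ} {c : ℝ} (h : Tendsto u atTop (nhds c)) :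
    ⨆ n, ENNReal.ofReal (u n) ≠ ∞ := by
  obtain ⟨C, hC⟩ := h.bddAbove_range
  exact ne_top_of_le_ne_top ENNReal.ofReal_ne_top
    (iSup_le fun n => ENNReal.ofReal_le_ofReal (hC ⟨n, rfl⟩))

section
variable {E : Type*} [SeminormedAddGroup E] (a : ℤ → E) {ρ ρ' : ℝ}

theorem tendsto_norm_mul_zpow_natCast_of_le
    (h : Tendsto (fun k : ℤ => ‖a k‖ * ρ' ^ k) cofinite (nhds 0)) (hρ : 0 ≤ ρ) (hle : ρ ≤ ρ') :
    Tendsto (fun n : ℕ => ‖a n‖ * ρ ^ (n : ℤ)) atTop (nhds 0) := by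
  rw [← Nat.cofinite_eq_atTop]
  refine squeeze_zero (fun n => by positivity) (fun n => ?_)
    (h.comp Nat.cast_injective.tendsto_cofinite)
  simp only [Function.comp_apply, zpow_natCast]
  gcongr

theorem tendsto_norm_mul_zpow_negSucc_of_le
    (h : Tendsto (fun k : ℤ => ‖a k‖ * ρ' ^ k) cofinite (nhds 0)) (hρ' : 0 < ρ') (hle : ρ' ≤ ρ) :
    Tendsto (fun n : ℕ => ‖a (-((n : ℤ) + 1))‖ * ρ ^ (-((n : ℤ) + 1))) atTop (nhds 0) := by
  have hρ : 0 < ρ := hρ'.trans_le hle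
  rw [← Nat.cofinite_eq_atTop]
  refine squeeze_zero (fun n => by positivity) (fun n => ?_)
    (h.comp (Function.Injective.tendsto_cofinite fun _ _ => Int.negSucc.inj))
  simp only [Function.comp_apply, Int.negSucc_eq, zpow_neg_natCast_add_one]
  gcongr

theorem iSup_ofReal_norm_mul_zpow_negSucc_le {ρ₀ : ℝ} (hρ₀ : 0 < ρ₀) (hle : ρ₀ ≤ ρ) :
    ⨆ n : ℕ, ENNReal.ofReal (‖a (-((n : ℤ) + 1))‖ * ρ ^ (-((n : ℤ) + 1))) ≤
      ENNReal.ofReal (ρ₀ / ρ) *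
        ⨆ n : ℕ, ENNReal.ofReal (‖a (-((n : ℤ) + 1))‖ * ρ₀ ^ (-((n : ℤ) + 1))) := by
  have hρ : 0 < ρ := hρ₀.trans_le hle
  rw [ENNReal.mul_iSup]
  refine iSup_mono fun n => ?_
  rw [← ENNReal.ofReal_mul (by positivity)]
  refine ENNReal.ofReal_le_ofReal ?_
  have hq : ρ₀ / ρ ≤ 1 := div_le_one_of_le₀ hle hρ.le
  calc ‖a (-((n : ℤ) + 1))‖ * ρ ^ (-((n : ℤ) + 1))
      = (ρ₀ / ρ) ^ (n + 1) * (‖a (-((n : ℤ) + 1))‖ * ρ₀ ^ (-((n : ℤ) + 1))) := by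
        simp only [zpow_neg_natCast_add_one, div_pow, inv_pow]
        field_simp
    _ ≤ ρ₀ / ρ * (‖a (-((n : ℤ) + 1))‖ * ρ₀ ^ (-((n : ℤ) + 1))) := by
        gcongr
        exact pow_le_of_le_one (by positivity) hq n.succ_ne_zero

theorem tendsto_iSup_ofReal_norm_mul_zpow_negSucc_atTop {ρ₀ : ℝ} (hρ₀ : 0 < ρ₀)
    (h : Tendsto (fun n : ℕ => ‖a (-((n : ℤ) + 1))‖ * ρ₀ ^ (-((n : ℤ) + 1))) atTop (nhds 0)) :
    Tendsto (fun ρ : ℝ => ⨆ n : ℕ, ENNReal.ofReal (‖a (-((n : ℤ) + 1))‖ * ρ ^ (-((n : ℤ) + 1))))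
      atTop (nhds 0) := by
  have hbound : Tendsto (fun ρ : ℝ => ENNReal.ofReal (ρ₀ / ρ) *
      ⨆ n : ℕ, ENNReal.ofReal (‖a (-((n : ℤ) + 1))‖ * ρ₀ ^ (-((n : ℤ) + 1)))) atTop (nhds 0) := by
    simpa using ENNReal.Tendsto.mul_const
      (ENNReal.tendsto_ofReal (tendsto_const_nhds.div_atTop tendsto_id))
      (Or.inr (ENNReal.iSup_ofReal_ne_top_of_tendsto h))
  refine tendsto_of_tendsto_of_tendsto_of_le_of_le' tendsto_const_nhds hbound
    (Eventually.of_forall fun ρ => zero_le) ?_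
  filter_upwards [eventually_ge_atTop ρ₀] with ρ hρ
  exact iSup_ofReal_norm_mul_zpow_negSucc_le a hρ₀ hρ

end

theorem mittagLeffler_decomposition_general {K : Type*} [NontriviallyNormedField K]
    (r₁ r₂ : ℝ) (hr₁ : 0 ≤ r₁) (hr : r₁ < r₂)
    (a : ℤ → K)
    (ha : ∀ ρ ∈ Set.Ioo r₁ r₂,
      Tendsto (fun k : ℤ => ‖a k‖ * ρ ^ k) cofinite (nhds 0)) :
    (∃! bc : (ℤ → K) × (ℤ → K),
        (∀ k : ℤ, k < 0 → bc.1 k = 0) ∧ (∀ k : ℤ, 0 ≤ k → bc.2 k = 0) ∧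
        (∀ k : ℤ, a k = bc.1 k + bc.2 k)) ∧
    (∀ ρ : ℝ, 0 < ρ → ρ < r₂ →
      Tendsto (fun k : ℕ => ‖a (k : ℤ)‖ * ρ ^ (k : ℤ)) atTop (nhds 0)) ∧
    (∀ ρ : ℝ, r₁ < ρ →
      Tendsto (fun k : ℕ => ‖a (-((k : ℤ) + 1))‖ * ρ ^ (-((k : ℤ) + 1)))
        atTop (nhds 0)) ∧
    (Tendsto
      (fun ρ : ℝ =>
        ⨆ k : ℕ, ENNReal.ofReal (‖a (-((k : ℤ) + 1))‖ * ρ ^ (-((k : ℤ) + 1))))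
      atTop (nhds 0)) ∧
    (∀ ρ ∈ Set.Ioo r₁ r₂,
      (⨆ k : ℤ, ENNReal.ofReal (‖a k‖ * ρ ^ k)) =
        max (⨆ k : ℕ, ENNReal.ofReal (‖a (k : ℤ)‖ * ρ ^ (k : ℤ)))
          (⨆ k : ℕ,
            ENNReal.ofReal (‖a (-((k : ℤ) + 1))‖ * ρ ^ (-((k : ℤ) + 1))))) := by
  obtain ⟨ρ₀, hρ₀⟩ := Set.nonempty_Ioo.2 hr
  have hρ₀_pos : 0 < ρ₀ := hr₁.trans_lt hρ₀.1
  refine ⟨?_, fun ρ hρ hρr₂ => ?_, fun ρ hρ => ?_, ?_, fun ρ _ => iSup_int_eq_sup _⟩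
  · simpa only [not_le] using existsUnique_split_add (0 ≤ ·) a
  · exact tendsto_norm_mul_zpow_natCast_of_le a
      (ha _ ⟨hρ₀.1.trans_le (le_max_right _ _), max_lt hρr₂ hρ₀.2⟩) hρ.le (le_max_left ρ ρ₀)
  · exact tendsto_norm_mul_zpow_negSucc_of_le a
      (ha _ ⟨lt_min hρ hρ₀.1, (min_le_right _ _).trans_lt hρ₀.2⟩)
      (hr₁.trans_lt (lt_min hρ hρ₀.1)) (min_le_left ρ ρ₀)
  · exact tendsto_iSup_ofReal_norm_mul_zpow_negSucc_atTop a hρ₀_pos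
      (tendsto_norm_mul_zpow_negSucc_of_le a (ha ρ₀ hρ₀) hρ₀_pos le_rfl)

/-- Mittag-Leffler decomposition of a Laurent series converging on the annulus
`r₁ < |x| < r₂`: `f = f₊ + f₋` uniquely, with `f₊` a power series converging on
`|x| < r₂`, `f₋` (in negative powers) converging for `|x| > r₁` and tending to `0`
at infinity, and `|f|_ρ = max (|f₊|_ρ) (|f₋|_ρ)` for `ρ ∈ (r₁, r₂)`. -/
theorem mittagLeffler_decomposition {K : Type*} [NontriviallyNormedField K]
    [CompleteSpace K]
    (r₁ r₂ : ℝ) (hr₁ : 0 ≤ r₁) (hr : r₁ < r₂)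
    (a : ℤ → K)
    (ha : ∀ ρ ∈ Set.Ioo r₁ r₂,
      Tendsto (fun k : ℤ => ‖a k‖ * ρ ^ k) cofinite (nhds 0)) :
    (∃! bc : (ℤ → K) × (ℤ → K),
        (∀ k : ℤ, k < 0 → bc.1 k = 0) ∧ (∀ k : ℤ, 0 ≤ k → bc.2 k = 0) ∧
        (∀ k : ℤ, a k = bc.1 k + bc.2 k)) ∧
    (∀ ρ : ℝ, 0 < ρ → ρ < r₂ →
      Tendsto (fun k : ℕ => ‖a (k : ℤ)‖ * ρ ^ (k : ℤ)) atTop (nhds 0)) ∧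
    (∀ ρ : ℝ, r₁ < ρ →
      Tendsto (fun k : ℕ => ‖a (-((k : ℤ) + 1))‖ * ρ ^ (-((k : ℤ) + 1)))
        atTop (nhds 0)) ∧
    (Tendsto
      (fun ρ : ℝ =>
        ⨆ k : ℕ, ENNReal.ofReal (‖a (-((k : ℤ) + 1))‖ * ρ ^ (-((k : ℤ) + 1))))
      atTop (nhds 0)) ∧
    (∀ ρ ∈ Set.Ioo r₁ r₂,
      (⨆ k : ℤ, ENNReal.ofReal (‖a k‖ * ρ ^ k)) =
        max (⨆ k : ℕ, ENNReal.ofReal (‖a (k : ℤ)‖ * ρ ^ (k : ℤ)))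
          (⨆ k : ℕ,
            ENNReal.ofReal (‖a (-((k : ℤ) + 1))‖ * ρ ^ (-((k : ℤ) + 1))))) :=
  mittagLeffler_decomposition_general r₁ r₂ hr₁ hr a ha
end

section
/- Let K be a complete nonarchimedean valued field and a = Σ_{k≥0} a_k x^k a nonzero element of the Tate algebra K⟨x⟩ (so |a_k| → 0), with Gauss norm ‖a‖ = max_k |a_k|. Let d be the largest index k with |a_k| = ‖a‖ (the Weierstrass degree of a). Then multiplication by a on K⟨x⟩ is injective and the quotient K⟨x⟩/(a) is a K-vector space of dimension exactly d. -/
/-!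
Injectivity holds because `K⟦X⟧` is a domain. Let `e` be the Weierstrass degree of a nonzero
restricted `h`; in the coefficient of `a * h` of index `d + e` the term `a_d h_e` strictly dominates
all others, so `a * h` is never a polynomial of degree `< d`. Conversely every restricted `g` is
`a * Q + R` with `deg R < d` (Weierstrass division): dividing a truncation of `g` exactly by the
polynomial part `∑_{k ≤ d} a_k X^k`, whose leading coefficient dominates, leaves an error whose
coefficients of index `≥ d` are smaller by a fixed factor `δ < 1`, because the tail of `a` beyond
`d` has norm at most `δ ‖a_d‖`. Iterating, the quotients converge geometrically. Hence the
polynomials of degree `< d` map isomorphically onto `K⟨X⟩ ⧸ (a)`.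
-/

open Filter Topology

theorem exists_seq_of_forall_exists_succ {α : Type*} {P : ℕ → α → Prop} {r : ℕ → α → α → Prop}
    {x₀ : α} (h₀ : P 0 x₀) (h : ∀ n x, P n x → ∃ y, P (n + 1) y ∧ r n x y) :
    ∃ s : ℕ → α, s 0 = x₀ ∧ ∀ n, P n (s n) ∧ r n (s n) (s (n + 1)) := by
  have h' : ∀ n x, ∃ y, P n x → P (n + 1) y ∧ r n x y := fun n x => by
    by_cases hx : P n x
    · exact (h n x hx).imp fun _ hy _ => hy
    · exact ⟨x, fun h => absurd h hx⟩
  choose next hnext using h'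
  let s : ℕ → α := fun n => Nat.rec x₀ next n
  have hs : ∀ n, P n (s n) := fun n => Nat.rec h₀ (fun n ih => (hnext n _ ih).1) n
  exact ⟨s, rfl, fun n => ⟨hs n, (hnext n _ (hs n)).2⟩⟩

theorem exists_forall_le_of_tendsto_zero {u : ℕ → ℝ} (hu : Tendsto u atTop (𝓝 0))
    (h0 : ∀ k, 0 ≤ u k) : ∃ p, ∀ k, u k ≤ u p := by
  by_cases h : ∀ k, u k = 0
  · exact ⟨0, fun k => by rw [h k, h 0]⟩
  obtain ⟨m, hm⟩ := not_forall.1 h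
  refine continuous_of_discreteTopology.exists_forall_ge' m ?_
  rw [cocompact_eq_cofinite, Nat.cofinite_eq_atTop]
  exact (hu.eventually (gt_mem_nhds ((h0 m).lt_of_ne' hm))).mono fun _ => le_of_lt

theorem IsUltrametricDist.norm_sum_lt_of_forall_norm_lt {M ι : Type*} [SeminormedAddCommGroup M]
    [IsUltrametricDist M] {s : Finset ι} {f : ι → M} {C : ℝ} (hC : 0 < C)
    (h : ∀ i ∈ s, ‖f i‖ < C) : ‖∑ i ∈ s, f i‖ < C := by
  rcases s.eq_empty_or_nonempty with rfl | hs
  · simpa using hC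
  obtain ⟨i, hi, hle⟩ := exists_norm_finsetSum_le_of_nonempty hs f
  exact hle.trans_lt (h i hi)

theorem IsUltrametricDist.norm_sub_le_max {M : Type*} [SeminormedAddGroup M]
    [IsUltrametricDist M] (x y : M) : ‖x - y‖ ≤ max ‖x‖ ‖y‖ := by
  simpa [sub_eq_add_neg] using norm_add_le_max x (-y)

namespace PowerSeries

section Restricted

variable {R : Type*} [NormedRing R]

theorem isRestricted_one_iff {f : PowerSeries R} :
    IsRestricted 1 f ↔ Tendsto (fun n => ‖coeff n f‖) atTop (𝓝 0) := by
  simp [isRestricted_iff']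

theorem isRestricted_of_coeff_eq_zero {f : PowerSeries R} {N : ℕ}
    (h : ∀ k, N ≤ k → coeff k f = 0) : IsRestricted 1 f :=
  isRestricted_one_iff.2 <| tendsto_const_nhds.congr' <|
    (eventually_ge_atTop N).mono fun k hk => by simp [h k hk]

theorem isRestricted_coe (p : Polynomial R) : IsRestricted 1 (p : PowerSeries R) :=
  isRestricted_of_coeff_eq_zero (N := p.natDegree + 1) fun k hk => by
    rw [Polynomial.coeff_coe, Polynomial.coeff_eq_zero_of_natDegree_lt (by omega)]

theorem coe_trunc_of_coeff_eq_zero {f : PowerSeries R} {n : ℕ}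
    (h : ∀ k, n ≤ k → coeff k f = 0) : (trunc n f : PowerSeries R) = f := by
  ext k
  rw [Polynomial.coeff_coe, coeff_trunc]
  split_ifs with hk
  exacts [rfl, (h k (not_lt.1 hk)).symm]

theorem IsRestricted.sub {f g : PowerSeries R} (hf : IsRestricted 1 f) (hg : IsRestricted 1 g) :
    IsRestricted 1 (f - g) := by
  simpa [sub_eq_add_neg] using isRestricted.add 1 hf (isRestricted.neg 1 hg)

theorem IsRestricted.exists_norm_coeff_le {f : PowerSeries R} (hf : IsRestricted 1 f) :
    ∃ B, 0 < B ∧ ∀ k, ‖coeff k f‖ ≤ B := by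
  obtain ⟨B, hB⟩ := (isRestricted_one_iff.1 hf).bddAbove_range
  exact ⟨max B 1, by positivity, fun k => (hB ⟨k, rfl⟩).trans (le_max_left _ _)⟩

theorem norm_coeff_mul_le [IsUltrametricDist R] {f g : PowerSeries R} {Bf Bg : ℝ}
    (hBf : 0 ≤ Bf) (hBg : 0 ≤ Bg) (hf : ∀ k, ‖coeff k f‖ ≤ Bf) (hg : ∀ k, ‖coeff k g‖ ≤ Bg)
    (n : ℕ) : ‖coeff n (f * g)‖ ≤ Bf * Bg := by
  rw [coeff_mul]
  refine IsUltrametricDist.norm_sum_le_of_forall_le_of_nonneg (mul_nonneg hBf hBg) fun p _ => ?_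
  exact (norm_mul_le _ _).trans (mul_le_mul (hf _) (hg _) (norm_nonneg _) hBf)

open scoped WithPiTopology

variable [CompleteSpace R] {ι : Type*} {q : ι → PowerSeries R} {b : ι → ℝ}

theorem summable_of_norm_coeff_le (hb : Summable b) (hqb : ∀ i k, ‖coeff k (q i)‖ ≤ b i) :
    Summable q :=
  (WithPiTopology.summable_iff_summable_coeff R).2 fun k => hb.of_norm_bounded fun i => hqb i k

theorem isRestricted_tsum (hb : Summable b) (hq : ∀ i, IsRestricted 1 (q i))
    (hqb : ∀ i k, ‖coeff k (q i)‖ ≤ b i) : IsRestricted 1 (∑' i, q i) := by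
  have hsum := (WithPiTopology.hasSum_iff_hasSum_coeff R).1
    (summable_of_norm_coeff_le hb hqb).hasSum
  rw [isRestricted_one_iff, ← tendsto_zero_iff_norm_tendsto_zero]
  simp_rw [← (hsum _).tsum_eq]
  simpa using tendsto_tsum_of_dominated_convergence hb
    (fun i => tendsto_zero_iff_norm_tendsto_zero.2 (isRestricted_one_iff.1 (hq i)))
    (Eventually.of_forall fun k i => hqb i k)

end Restricted

section WeierstrassDegree

variable {K : Type*} [NormedField K]

structure IsWeierstrassDegree (f : PowerSeries K) (d : ℕ) : Prop where
  norm_coeff_le : ∀ k, ‖coeff k f‖ ≤ ‖coeff d f‖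
  norm_coeff_lt : ∀ k, d < k → ‖coeff k f‖ < ‖coeff d f‖

namespace IsWeierstrassDegree

variable {f : PowerSeries K} {d : ℕ}

theorem norm_coeff_pos (hf : IsWeierstrassDegree f d) : 0 < ‖coeff d f‖ :=
  (norm_nonneg _).trans_lt (hf.norm_coeff_lt (d + 1) d.lt_succ_self)

theorem ne_zero (hf : IsWeierstrassDegree f d) : f ≠ 0 := by
  rintro rfl
  simpa using hf.norm_coeff_pos

theorem trunc (hf : IsWeierstrassDegree f d) :
    IsWeierstrassDegree (trunc (d + 1) f : PowerSeries K) d := by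
  have hcoeff : ∀ k, coeff k (PowerSeries.trunc (d + 1) f : PowerSeries K) =
      if k ≤ d then coeff k f else 0 := fun k => by
    simp [Polynomial.coeff_coe, coeff_trunc]
  refine ⟨fun k => ?_, fun k hk => ?_⟩ <;> simp only [hcoeff, le_refl, if_true]
  · split_ifs
    exacts [hf.norm_coeff_le k, by simp]
  · simpa [not_le.2 hk] using hf.norm_coeff_pos

theorem exists_of_isRestricted (hf : IsRestricted 1 f) (hf0 : f ≠ 0) :
    ∃ e, IsWeierstrassDegree f e := by
  have hu := isRestricted_one_iff.1 hf
  obtain ⟨p, hp⟩ := exists_forall_le_of_tendsto_zero hu fun k => norm_nonneg _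
  have hpos : 0 < ‖coeff p f‖ := by
    by_contra! h
    exact hf0 (ext fun k => by simpa using (hp k).trans h)
  obtain ⟨N, hN⟩ := eventually_atTop.1 (hu.eventually (gt_mem_nhds hpos))
  have hpN : p ≤ N := by
    by_contra! h
    exact (hN p h.le).false
  classical
  set e := Nat.findGreatest (fun k => ‖coeff p f‖ ≤ ‖coeff k f‖) N
  have he : ‖coeff e f‖ = ‖coeff p f‖ := le_antisymm (hp e) <|
    Nat.findGreatest_spec (P := fun k => ‖coeff p f‖ ≤ ‖coeff k f‖) hpN le_rfl
  refine ⟨e, fun k => he ▸ hp k, fun k hk => ?_⟩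
  rw [he]
  rcases le_or_gt k N with hkN | hkN
  · exact not_le.1 (Nat.findGreatest_is_greatest hk hkN)
  · exact hN k hkN.le

theorem exists_norm_coeff_le_mul (hf : IsWeierstrassDegree f d) (hr : IsRestricted 1 f) :
    ∃ δ, 0 < δ ∧ δ < 1 ∧ ∀ k, d < k → ‖coeff k f‖ ≤ δ * ‖coeff d f‖ := by
  have hu : Tendsto (fun n => ‖coeff (n + (d + 1)) f‖) atTop (𝓝 0) :=
    (isRestricted_one_iff.1 hr).comp (tendsto_add_atTop_nat (d + 1))
  obtain ⟨p, hp⟩ := exists_forall_le_of_tendsto_zero hu fun _ => norm_nonneg _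
  have hM := hf.norm_coeff_pos
  obtain ⟨δ, hcδ, hδ1⟩ := exists_between <|
    (div_lt_one hM).2 (hf.norm_coeff_lt (p + (d + 1)) (by omega))
  refine ⟨δ, (div_nonneg (norm_nonneg _) hM.le).trans_lt hcδ, hδ1, fun k hk => ?_⟩
  calc ‖coeff k f‖ ≤ ‖coeff (p + (d + 1)) f‖ := by
        simpa [Nat.sub_add_cancel (Nat.succ_le_of_lt hk)] using hp (k - (d + 1))
    _ ≤ δ * ‖coeff d f‖ := (div_le_iff₀ hM).1 hcδ.le

variable [IsUltrametricDist K]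

open Finset in
theorem norm_coeff_add_mul {g : PowerSeries K} {e : ℕ} (hf : IsWeierstrassDegree f d)
    (hg : IsWeierstrassDegree g e) :
    ‖coeff (d + e) (f * g)‖ = ‖coeff d f‖ * ‖coeff e g‖ := by
  have hde : (d, e) ∈ antidiagonal (d + e) := HasAntidiagonal.mem_antidiagonal.2 rfl
  have hrest : ‖∑ x ∈ (antidiagonal (d + e)).erase (d, e), coeff x.1 f * coeff x.2 g‖ <
      ‖coeff d f * coeff e g‖ := by
    rw [norm_mul]
    refine IsUltrametricDist.norm_sum_lt_of_forall_norm_lt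
      (mul_pos hf.norm_coeff_pos hg.norm_coeff_pos) fun x hx => ?_
    obtain ⟨hxde, hx⟩ := mem_erase.1 hx
    rw [HasAntidiagonal.mem_antidiagonal] at hx
    rw [norm_mul]
    rcases lt_or_ge d x.1 with h | h
    · calc ‖coeff x.1 f‖ * ‖coeff x.2 g‖ ≤ ‖coeff x.1 f‖ * ‖coeff e g‖ :=
            mul_le_mul_of_nonneg_left (hg.norm_coeff_le _) (norm_nonneg _)
        _ < ‖coeff d f‖ * ‖coeff e g‖ :=
            mul_lt_mul_of_pos_right (hf.norm_coeff_lt _ h) hg.norm_coeff_pos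
    · have h' : e < x.2 := by
        by_contra! h'
        exact hxde (Prod.ext (by omega) (by omega))
      calc ‖coeff x.1 f‖ * ‖coeff x.2 g‖ ≤ ‖coeff d f‖ * ‖coeff x.2 g‖ :=
            mul_le_mul_of_nonneg_right (hf.norm_coeff_le _) (norm_nonneg _)
        _ < ‖coeff d f‖ * ‖coeff e g‖ :=
            mul_lt_mul_of_pos_left (hg.norm_coeff_lt _ h') hf.norm_coeff_pos
  rw [coeff_mul, ← add_sum_erase _ _ hde,
    IsUltrametricDist.norm_add_eq_max_of_norm_ne_norm hrest.ne', max_eq_left hrest.le, norm_mul]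

theorem eq_zero_of_mul_eq_coe (hf : IsWeierstrassDegree f d) {g : PowerSeries K}
    (hg : IsRestricted 1 g) {p : Polynomial K} (hp : p ∈ Polynomial.degreeLT K d)
    (hfg : f * g = p) : g = 0 := by
  by_contra hg0
  obtain ⟨e, he⟩ := exists_of_isRestricted hg hg0
  have h := hf.norm_coeff_add_mul he
  rw [hfg, Polynomial.coeff_coe, Polynomial.coeff_eq_zero_of_degree_lt, norm_zero] at h
  · exact (mul_pos hf.norm_coeff_pos he.norm_coeff_pos).ne h
  · exact (Polynomial.mem_degreeLT.1 hp).trans_le (by exact_mod_cast d.le_add_right e)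

theorem exists_eq_mul_add_of_coeff_eq_zero {A : PowerSeries K} (hA : IsWeierstrassDegree A d)
    (hAd : ∀ k, d < k → coeff k A = 0) {B : ℝ} (hB : 0 ≤ B) (n : ℕ) {F : PowerSeries K}
    (hF : ∀ k, d + n ≤ k → coeff k F = 0) (hFB : ∀ k, ‖coeff k F‖ ≤ B) :
    ∃ q r, F = A * q + r ∧ (∀ k, ‖coeff k q‖ ≤ B / ‖coeff d A‖) ∧
      (∀ k, n ≤ k → coeff k q = 0) ∧ ∀ k, d ≤ k → coeff k r = 0 := by
  have hM := hA.norm_coeff_pos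
  induction n generalizing F with
  | zero => exact ⟨0, F, by simp, fun k => by simp [div_nonneg hB hM.le], fun k _ => by simp, hF⟩
  | succ n ih =>
    set t := coeff (d + n) F / coeff d A
    have ht : ‖t‖ ≤ B / ‖coeff d A‖ := by
      rw [norm_div]
      exact div_le_div_of_nonneg_right (hFB _) hM.le
    have hcoeff : ∀ k, coeff k (F - C t * A * X ^ n) =
        coeff k F - if n ≤ k then t * coeff (k - n) A else 0 := fun k => by
      rw [map_sub, coeff_mul_X_pow', coeff_C_mul]
    have hF' : ∀ k, d + n ≤ k → coeff k (F - C t * A * X ^ n) = 0 := fun k hk => by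
      rw [hcoeff, if_pos (by omega)]
      rcases hk.eq_or_lt with rfl | hk
      · rw [Nat.add_sub_cancel, div_mul_cancel₀ _ (norm_pos_iff.1 hM), sub_self]
      · rw [hF k (by omega), hAd (k - n) (by omega), mul_zero, sub_zero]
    have hF'B : ∀ k, ‖coeff k (F - C t * A * X ^ n)‖ ≤ B := fun k => by
      rw [hcoeff]
      refine (IsUltrametricDist.norm_sub_le_max _ _).trans (max_le (hFB k) ?_)
      split_ifs
      · rw [norm_mul]
        calc ‖t‖ * ‖coeff (k - n) A‖ ≤ B / ‖coeff d A‖ * ‖coeff d A‖ :=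
              mul_le_mul ht (hA.norm_coeff_le _) (norm_nonneg _) (div_nonneg hB hM.le)
          _ = B := div_mul_cancel₀ _ hM.ne'
      · simpa using hB
    obtain ⟨q, r, hFqr, hqB, hq, hr⟩ := ih hF' hF'B
    refine ⟨q + C t * X ^ n, r, by linear_combination hFqr, fun k => ?_, fun k hk => ?_, hr⟩
    · rw [map_add, coeff_C_mul_X_pow]
      refine (IsUltrametricDist.norm_add_le_max _ _).trans (max_le (hqB k) ?_)
      split_ifs
      exacts [ht, by simpa using div_nonneg hB hM.le]
    · rw [map_add, coeff_C_mul_X_pow, hq k (by omega), if_neg (by omega), add_zero]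

theorem exists_norm_coeff_sub_mul_le (hf : IsWeierstrassDegree f d) {δ : ℝ} (hδ : 0 < δ)
    (htail : ∀ k, d < k → ‖coeff k f‖ ≤ δ * ‖coeff d f‖) {g : PowerSeries K}
    (hg : IsRestricted 1 g) {B : ℝ} (hB : 0 < B) (hgB : ∀ k, d ≤ k → ‖coeff k g‖ ≤ B) :
    ∃ q, IsRestricted 1 q ∧ (∀ k, ‖coeff k q‖ ≤ B / ‖coeff d f‖) ∧
      ∀ k, d ≤ k → ‖coeff k (g - f * q)‖ ≤ δ * B := by
  have hM := hf.norm_coeff_pos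
  obtain ⟨N, hN⟩ := eventually_atTop.1
    ((isRestricted_one_iff.1 hg).eventually (ge_mem_nhds (mul_pos hδ hB)))
  set A : PowerSeries K := (PowerSeries.trunc (d + 1) f : PowerSeries K)
  have hAcoeff : ∀ k, coeff k A = if k ≤ d then coeff k f else 0 := fun k => by
    simp [A, Polynomial.coeff_coe, coeff_trunc]
  have hAd : coeff d A = coeff d f := by simp [hAcoeff]
  set F : PowerSeries K := PowerSeries.mk fun k => if d ≤ k ∧ k < N then coeff k g else 0
  obtain ⟨q, r, hFqr, hqB, hq, hr⟩ := hf.trunc.exists_eq_mul_add_of_coeff_eq_zero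
    (fun k hk => by rw [hAcoeff, if_neg (not_le.2 hk)]) hB.le N (F := F)
    (fun k hk => by simp [F]; omega)
    (fun k => by
      simp only [F, coeff_mk]
      split_ifs with hk
      exacts [hgB k hk.1, by simpa using hB.le])
  rw [hAd] at hqB
  refine ⟨q, isRestricted_of_coeff_eq_zero hq, hqB, fun k hk => ?_⟩
  -- In degrees `≥ d`: `g - F` is small by the choice of `N`, `r` vanishes, and `(A - f) * q` is
  -- small because only the tail of `f` beyond `d` survives in `A - f`.
  have hsplit : g - f * q = (g - F) + r + (A - f) * q := by linear_combination hFqr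
  have hAf : ∀ j, ‖coeff j (A - f)‖ ≤ δ * ‖coeff d f‖ := fun j => by
    rw [map_sub, hAcoeff]
    split_ifs with hj
    · simpa using mul_nonneg hδ.le hM.le
    · simpa using htail j (not_le.1 hj)
  rw [hsplit, map_add, map_add]
  refine (IsUltrametricDist.norm_add_le_max _ _).trans
    (max_le ((IsUltrametricDist.norm_add_le_max _ _).trans (max_le ?_ ?_)) ?_)
  · simp only [F, map_sub, coeff_mk]
    split_ifs with hkN
    · simpa using mul_nonneg hδ.le hB.le
    · simpa using hN k (by omega)
  · simpa [hr k hk] using mul_nonneg hδ.le hB.le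
  · calc ‖coeff k ((A - f) * q)‖ ≤ δ * ‖coeff d f‖ * (B / ‖coeff d f‖) :=
          norm_coeff_mul_le (by positivity) (by positivity) hAf hqB k
      _ = δ * B := by field_simp

open scoped WithPiTopology in
theorem exists_eq_mul_add [CompleteSpace K] (hf : IsWeierstrassDegree f d)
    (hr : IsRestricted 1 f) {g : PowerSeries K} (hg : IsRestricted 1 g) :
    ∃ Q, IsRestricted 1 Q ∧ ∃ R ∈ Polynomial.degreeLT K d, g = f * Q + (R : PowerSeries K) := by
  obtain ⟨δ, hδ0, hδ1, htail⟩ := hf.exists_norm_coeff_le_mul hr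
  obtain ⟨B, hB, hgB⟩ := hg.exists_norm_coeff_le
  obtain ⟨S, hS0, hS⟩ := exists_seq_of_forall_exists_succ
    (P := fun n S => IsRestricted 1 S ∧ ∀ k, d ≤ k → ‖coeff k (g - f * S)‖ ≤ δ ^ n * B)
    (r := fun n S S' => ∀ k, ‖coeff k (S' - S)‖ ≤ B / ‖coeff d f‖ * δ ^ n)
    ⟨isRestricted_zero 1, fun k _ => by simpa using hgB k⟩ fun n S ⟨hS, hSB⟩ => by
      obtain ⟨q, hq, hqB, hgq⟩ := hf.exists_norm_coeff_sub_mul_le hδ0 htail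
        (hg.sub (isRestricted.mul 1 hr hS)) (by positivity) hSB
      refine ⟨S + q, ⟨isRestricted.add 1 hS hq, fun k hk => ?_⟩, fun k => ?_⟩
      · rw [mul_add, ← sub_sub]
        exact (hgq k hk).trans_eq (by ring)
      · simpa only [add_sub_cancel_left] using (hqB k).trans_eq (by ring)
  have hb : Summable fun n => B / ‖coeff d f‖ * δ ^ n :=
    (summable_geometric_of_lt_one hδ0.le hδ1).mul_left _
  have hD : ∀ n k, ‖coeff k (S (n + 1) - S n)‖ ≤ B / ‖coeff d f‖ * δ ^ n := fun n => (hS n).2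
  have hSQ : Tendsto S atTop (𝓝 (∑' n, (S (n + 1) - S n))) := by
    simpa only [Finset.sum_range_sub, hS0, sub_zero] using
      (summable_of_norm_coeff_le hb hD).hasSum.tendsto_sum_nat
  set Q := ∑' n, (S (n + 1) - S n)
  have hQ : IsRestricted 1 Q := isRestricted_tsum hb (fun n => (hS (n + 1)).1.1.sub (hS n).1.1) hD
  have hhigh : ∀ k, d ≤ k → coeff k (g - f * Q) = 0 := fun k hk => by
    refine tendsto_nhds_unique (((WithPiTopology.continuous_coeff K k).tendsto _).comp
      (tendsto_const_nhds.sub (hSQ.const_mul f))) ?_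
    rw [tendsto_zero_iff_norm_tendsto_zero]
    exact squeeze_zero (fun _ => norm_nonneg _) (fun n => (hS n).1.2 k hk)
      (by simpa using (tendsto_pow_atTop_nhds_zero_of_lt_one hδ0.le hδ1).mul_const B)
  refine ⟨Q, hQ, PowerSeries.trunc d (g - f * Q),
    Polynomial.mem_degreeLT.2 (degree_trunc_lt _ _), ?_⟩
  rw [coe_trunc_of_coeff_eq_zero hhigh]
  ring

end IsWeierstrassDegree

end WeierstrassDegree

end PowerSeries

open PowerSeries

theorem tate_algebra_mul_index_general {K : Type*} [NontriviallyNormedField K]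
    [CompleteSpace K] [IsUltrametricDist K]
    (V : Submodule K (PowerSeries K))
    (hV : ∀ f : PowerSeries K, f ∈ V ↔
      Tendsto (fun n => ‖PowerSeries.coeff (R := K) n f‖) atTop (nhds 0))
    (a : PowerSeries K) (haV : a ∈ V)
    (d : ℕ)
    (hd1 : ∀ k, ‖PowerSeries.coeff (R := K) k a‖ ≤ ‖PowerSeries.coeff (R := K) d a‖)
    (hd2 : ∀ k, d < k → ‖PowerSeries.coeff (R := K) k a‖ < ‖PowerSeries.coeff (R := K) d a‖)
    (W : Submodule K V)
    (hW : ∀ g : V, g ∈ W ↔ ∃ f ∈ V, a * f = (g : PowerSeries K)) :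
    Function.Injective (fun f : V => a * (f : PowerSeries K)) ∧
    Module.finrank K (V ⧸ W) = d := by
  have hV' : ∀ f, f ∈ V ↔ IsRestricted 1 f := fun f => (hV f).trans isRestricted_one_iff.symm
  have hd : IsWeierstrassDegree a d := ⟨hd1, hd2⟩
  refine ⟨fun f g hfg => Subtype.ext (mul_left_cancel₀ hd.ne_zero hfg), ?_⟩
  let ι : Polynomial.degreeLT K d →ₗ[K] V := LinearMap.codRestrict V
    ((Polynomial.coeToPowerSeries.algHom K).toLinearMap ∘ₗ (Polynomial.degreeLT K d).subtype)
    fun p => (hV' _).2 (isRestricted_coe p.1)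
  have hφ : Function.Bijective (W.mkQ ∘ₗ ι) := by
    refine ⟨(injective_iff_map_eq_zero _).2 fun p hp => ?_, fun z => ?_⟩
    · obtain ⟨h, hh, hah⟩ := (hW _).1 ((Submodule.Quotient.mk_eq_zero W).1 hp)
      have h0 := hd.eq_zero_of_mul_eq_coe ((hV' h).1 hh) p.2 hah
      rw [h0, mul_zero] at hah
      exact Subtype.ext (Polynomial.coe_eq_zero_iff.1 hah.symm)
    · obtain ⟨g, rfl⟩ := W.mkQ_surjective z
      obtain ⟨Q, hQ, R, hR, hgQR⟩ := hd.exists_eq_mul_add ((hV' a).1 haV) ((hV' g).1 g.2)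
      refine ⟨⟨R, hR⟩, ((Submodule.Quotient.eq W).2 ((hW _).2 ⟨Q, (hV' Q).2 hQ, ?_⟩)).symm⟩
      simp [ι, hgQR]
  rw [← (LinearEquiv.ofBijective _ hφ).finrank_eq, (Polynomial.degreeLTEquiv K d).finrank_eq,
    Module.finrank_fin_fun]

/-- Weierstrass division / index of multiplication in the Tate algebra: if `a` is a
nonzero element of `K⟨x⟩` with Weierstrass degree `d` (the largest index where the
Gauss norm is attained), then multiplication by `a` is injective on `K⟨x⟩` and the
quotient `K⟨x⟩/(a)` has `K`-dimension exactly `d`. -/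
theorem tate_algebra_mul_index {K : Type*} [NontriviallyNormedField K]
    [CompleteSpace K] [IsUltrametricDist K]
    (V : Submodule K (PowerSeries K))
    (hV : ∀ f : PowerSeries K, f ∈ V ↔
      Tendsto (fun n => ‖PowerSeries.coeff (R := K) n f‖) atTop (nhds 0))
    (a : PowerSeries K) (haV : a ∈ V) (ha0 : a ≠ 0)
    (d : ℕ)
    (hd1 : ∀ k, ‖PowerSeries.coeff (R := K) k a‖ ≤ ‖PowerSeries.coeff (R := K) d a‖)
    (hd2 : ∀ k, d < k → ‖PowerSeries.coeff (R := K) k a‖ < ‖PowerSeries.coeff (R := K) d a‖)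
    (W : Submodule K V)
    (hW : ∀ g : V, g ∈ W ↔ ∃ f ∈ V, a * f = (g : PowerSeries K)) :
    Function.Injective (fun f : V => a * (f : PowerSeries K)) ∧
    Module.finrank K (V ⧸ W) = d :=
  tate_algebra_mul_index_general V hV a haV d hd1 hd2 W hW
end
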